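/- arXiv:2506.20428 — 9 statements merged into one kernel-verified Lean document; each statement's English description precedes it below -/
import Mathlib

section
/- The robustness of athermality is multiplicative under tensor products: for density matrices ρ_A, ρ_B and positive-definite density matrices γ_A, γ_B on finite-dimensional spaces, min{λ | ρ_A ⊗ ρ_B ≤ λ (γ_A ⊗ γ_B)} = min{λ | ρ_A ≤ λγ_A} · min{λ | ρ_B ≤ λγ_B}. -/
open Matrix ComplexOrder Kronecker

set_option linter.unusedSectionVars false

section Helpers

variable {m n : Type*} [Fintype m] [DecidableEq m] [Fintype n] [DecidableEq n]

private lemma kronConjTranspose' (A : Matrix m m ℂ) (B : Matrix n n ℂ) :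
    (A ⊗ₖ B)ᴴ = Aᴴ ⊗ₖ Bᴴ := by
  ext ⟨i, j⟩ ⟨k, l⟩
  simp only [conjTranspose_apply, kroneckerMap_apply, star_mul']

private lemma posSemidef_kron {A : Matrix m m ℂ} {B : Matrix n n ℂ}
    (hA : A.PosSemidef) (hB : B.PosSemidef) : (A ⊗ₖ B).PosSemidef := by
  exact hA.kronecker hB

private lemma kron_quad (M : Matrix m m ℂ) (N : Matrix n n ℂ) (x : m → ℂ) (y : n → ℂ) :
    star (fun p : m × n => x p.1 * y p.2) ⬝ᵥ (M ⊗ₖ N).mulVec (fun p => x p.1 * y p.2)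
      = (star x ⬝ᵥ M.mulVec x) * (star y ⬝ᵥ N.mulVec y) := by
  simp only [dotProduct, mulVec, Pi.star_apply, kroneckerMap_apply, Fintype.sum_prod_type,
    star_mul']
  rw [Finset.sum_mul_sum]
  refine Finset.sum_congr rfl fun i _ => ?_
  refine Finset.sum_congr rfl fun j _ => ?_
  have h : (star (x i) * ∑ k, M i k * x k) * (star (y j) * ∑ l, N j l * y l)
      = star (x i) * star (y j) * ((∑ k, M i k * x k) * (∑ l, N j l * y l)) := by ring
  rw [h, Finset.sum_mul_sum]
  simp only [Finset.mul_sum]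
  refine Finset.sum_congr rfl fun k _ => ?_
  refine Finset.sum_congr rfl fun l _ => ?_
  ring

end Helpers

section Spectral

variable {n : Type*} [Fintype n] [DecidableEq n]

private lemma conj_diag_psd {M : Matrix n n ℂ} (hM : M.IsHermitian) (d : n → ℝ)
    (hd : ∀ i, 0 ≤ d i) :
    ((hM.eigenvectorUnitary : Matrix n n ℂ) * diagonal (fun i => (d i : ℂ)) *
      star (hM.eigenvectorUnitary : Matrix n n ℂ)).PosSemidef := by
  rw [star_eq_conjTranspose]
  exact PosSemidef.mul_mul_conjTranspose_same
    (PosSemidef.diagonal fun i => Complex.zero_le_real.mpr (hd i)) _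

private lemma herm_le_smul_one {M : Matrix n n ℂ} (hM : M.IsHermitian) {c : ℝ}
    (h : ∀ i, hM.eigenvalues i ≤ c) : ((c : ℂ) • (1 : Matrix n n ℂ) - M).PosSemidef := by
  set U : Matrix n n ℂ := (hM.eigenvectorUnitary : Matrix n n ℂ)
  have hU : U * star U = 1 := mem_unitaryGroup_iff.mp hM.eigenvectorUnitary.2
  have h1 : U * ((c : ℂ) • (1 : Matrix n n ℂ)) * star U = (c : ℂ) • 1 := by
    rw [mul_smul_comm, smul_mul_assoc, mul_one, hU]
  have h2 : (c : ℂ) • (1 : Matrix n n ℂ) - diagonal (RCLike.ofReal ∘ hM.eigenvalues)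
      = diagonal (fun i => ((c - hM.eigenvalues i : ℝ) : ℂ)) := by
    rw [smul_one_eq_diagonal, diagonal_sub]
    congr 1
    funext i
    simp [Function.comp]
  have key : (c : ℂ) • (1 : Matrix n n ℂ) - M
      = U * diagonal (fun i => ((c - hM.eigenvalues i : ℝ) : ℂ)) * star U := by
    conv_lhs => rw [← h1, hM.spectral_theorem, Unitary.conjStarAlgAut_apply]
    rw [← sub_mul, ← mul_sub, h2]
  rw [key]
  exact conj_diag_psd hM _ fun i => by linarith [h i]

private lemma smul_one_sub_herm {M : Matrix n n ℂ} (hM : M.IsHermitian) :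
    ∃ c : ℝ, 0 ≤ c ∧ ((c : ℂ) • (1 : Matrix n n ℂ) - M).PosSemidef := by
  obtain ⟨c0, hc0⟩ := Finset.exists_le (α := ℝ) (Finset.univ.image hM.eigenvalues)
  refine ⟨max c0 0, le_max_right _ _, herm_le_smul_one hM fun i => ?_⟩
  exact le_trans (hc0 _ (Finset.mem_image_of_mem _ (Finset.mem_univ i))) (le_max_left _ _)

private lemma smul_one_le_herm {M : Matrix n n ℂ} (hM : M.IsHermitian) {e : ℝ}
    (h : ∀ i, e ≤ hM.eigenvalues i) : (M - (e : ℂ) • (1 : Matrix n n ℂ)).PosSemidef := by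
  set U : Matrix n n ℂ := (hM.eigenvectorUnitary : Matrix n n ℂ)
  have hU : U * star U = 1 := mem_unitaryGroup_iff.mp hM.eigenvectorUnitary.2
  have h1 : U * ((e : ℂ) • (1 : Matrix n n ℂ)) * star U = (e : ℂ) • 1 := by
    rw [mul_smul_comm, smul_mul_assoc, mul_one, hU]
  have h2 : diagonal (RCLike.ofReal ∘ hM.eigenvalues) - (e : ℂ) • (1 : Matrix n n ℂ)
      = diagonal (fun i => ((hM.eigenvalues i - e : ℝ) : ℂ)) := by
    rw [smul_one_eq_diagonal, diagonal_sub]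
    congr 1
    funext i
    simp [Function.comp]
  have key : M - (e : ℂ) • (1 : Matrix n n ℂ)
      = U * diagonal (fun i => ((hM.eigenvalues i - e : ℝ) : ℂ)) * star U := by
    conv_lhs => rw [hM.spectral_theorem, Unitary.conjStarAlgAut_apply, ← h1]
    rw [← sub_mul, ← mul_sub, h2]
  rw [key]
  exact conj_diag_psd hM _ fun i => by linarith [h i]

private lemma posDef_sub_smul_one [Nonempty n] {M : Matrix n n ℂ} (hM : M.PosDef) :
    ∃ e : ℝ, 0 < e ∧ (M - (e : ℂ) • (1 : Matrix n n ℂ)).PosSemidef := by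
  obtain ⟨i0, -, hi0⟩ := Finset.exists_min_image Finset.univ hM.isHermitian.eigenvalues
    ⟨Classical.arbitrary n, Finset.mem_univ _⟩
  exact ⟨hM.isHermitian.eigenvalues i0, hM.eigenvalues_pos i0,
    smul_one_le_herm hM.isHermitian fun i => hi0 i (Finset.mem_univ i)⟩

end Spectral

section SLemmas

variable {n : Type*} [Fintype n] [DecidableEq n]

private lemma psd_smul_real {M : Matrix n n ℂ} (hM : M.PosSemidef) {r : ℝ} (hr : 0 ≤ r) :
    ((r : ℂ) • M).PosSemidef := by
  refine .of_dotProduct_mulVec_nonneg ?_ fun x => ?_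
  · rw [IsHermitian, conjTranspose_smul, hM.isHermitian.eq, Complex.star_def, Complex.conj_ofReal]
  · rw [smul_mulVec, dotProduct_smul, smul_eq_mul]
    exact mul_nonneg (Complex.zero_le_real.mpr hr) (hM.dotProduct_mulVec_nonneg x)

private lemma psd_trace_nonneg {M : Matrix n n ℂ} (hM : M.PosSemidef) : 0 ≤ M.trace := by
  rw [trace]
  refine Finset.sum_nonneg fun i _ => ?_
  have := hM.dotProduct_mulVec_nonneg (Pi.single i 1)
  simpa [dotProduct, mulVec, Pi.single_apply, Finset.sum_ite_eq, diag] using this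

variable {γ ρ : Matrix n n ℂ}

private lemma herm_comb (hγ : γ.IsHermitian) (hρ : ρ.IsHermitian) (l : ℝ) :
    ((l : ℂ) • γ - ρ).IsHermitian := by
  rw [IsHermitian, conjTranspose_sub, conjTranspose_smul, hγ.eq, hρ.eq,
    Complex.star_def, Complex.conj_ofReal]

private lemma S_quad_expand (l : ℝ) (x : n → ℂ) :
    star x ⬝ᵥ ((l : ℂ) • γ - ρ).mulVec x
      = (l : ℂ) * (star x ⬝ᵥ γ.mulVec x) - star x ⬝ᵥ ρ.mulVec x := by
  rw [sub_mulVec, dotProduct_sub, smul_mulVec, dotProduct_smul, smul_eq_mul]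

private lemma S_one_le (hγtr : γ.trace = 1) (hρtr : ρ.trace = 1) {l : ℝ}
    (hl : ((l : ℂ) • γ - ρ).PosSemidef) : 1 ≤ l := by
  have h := psd_trace_nonneg hl
  rw [trace_sub, trace_smul, hγtr, hρtr, smul_eq_mul, mul_one] at h
  have h2 : (0 : ℂ) ≤ ((l - 1 : ℝ) : ℂ) := by push_cast; exact h
  have := Complex.zero_le_real.mp h2
  linarith

private lemma S_eq (hγ : γ.PosSemidef) (hρ : ρ.PosSemidef) :
    {l : ℝ | ((l : ℂ) • γ - ρ).PosSemidef}
      = ⋂ x : n → ℂ, {l : ℝ | (star x ⬝ᵥ ρ.mulVec x).re ≤ l * (star x ⬝ᵥ γ.mulVec x).re} := by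
  ext l
  simp only [Set.mem_setOf_eq, Set.mem_iInter]
  constructor
  · intro hl x
    have h := hl.dotProduct_mulVec_nonneg x
    rw [S_quad_expand] at h
    have := (Complex.le_def.mp h).1
    simp only [Complex.zero_re, Complex.sub_re, Complex.re_ofReal_mul] at this
    linarith
  · intro h
    refine .of_dotProduct_mulVec_nonneg (herm_comb hγ.isHermitian hρ.isHermitian l) fun x => ?_
    rw [S_quad_expand]
    have himγ : (star x ⬝ᵥ γ.mulVec x).im = 0 := ((Complex.le_def.mp (hγ.dotProduct_mulVec_nonneg x)).2).symm
    have himρ : (star x ⬝ᵥ ρ.mulVec x).im = 0 := ((Complex.le_def.mp (hρ.dotProduct_mulVec_nonneg x)).2).symm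
    rw [Complex.le_def]
    constructor
    · simpa [Complex.sub_re, Complex.re_ofReal_mul] using h x
    · simp [Complex.sub_im, Complex.im_ofReal_mul, himγ, himρ]

private lemma S_closed (hγ : γ.PosSemidef) (hρ : ρ.PosSemidef) :
    IsClosed {l : ℝ | ((l : ℂ) • γ - ρ).PosSemidef} := by
  rw [S_eq hγ hρ]
  exact isClosed_iInter fun x =>
    isClosed_le continuous_const (continuous_id.mul continuous_const)

private lemma S_nonempty (hγ : γ.PosDef) (hρ : ρ.IsHermitian) [Nonempty n] :
    ∃ l : ℝ, ((l : ℂ) • γ - ρ).PosSemidef := by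
  obtain ⟨e, he, hγe⟩ := posDef_sub_smul_one hγ
  obtain ⟨c, hc, hcρ⟩ := smul_one_sub_herm hρ
  refine ⟨c / e, ?_⟩
  have hce : c / e * e = c := div_mul_cancel₀ _ he.ne'
  have h4 : ((c / e : ℝ) : ℂ) • ((e : ℝ) : ℂ) • (1 : Matrix n n ℂ) = ((c : ℝ) : ℂ) • 1 := by
    rw [smul_smul, ← Complex.ofReal_mul, hce]
  have key : ((c / e : ℝ) : ℂ) • γ - ρ
      = ((c / e : ℝ) : ℂ) • (γ - (e : ℂ) • 1) + ((c : ℂ) • 1 - ρ) := by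
    rw [smul_sub, h4]
    abel
  rw [key]
  exact (psd_smul_real hγe (div_nonneg hc he.le)).add hcρ

private lemma S_min_kernel [Nonempty n] (hγ : γ.PosDef) (hρ : ρ.PosSemidef) {l : ℝ}
    (hl : ((l : ℂ) • γ - ρ).PosSemidef)
    (hmin : ∀ l' : ℝ, ((l' : ℂ) • γ - ρ).PosSemidef → l ≤ l') :
    ∃ x : n → ℂ, x ≠ 0 ∧ ((l : ℂ) • γ - ρ).mulVec x = 0 := by
  set M := (l : ℂ) • γ - ρ with hMdef
  by_cases hdet : M.det = 0
  · obtain ⟨x, hx0, hx⟩ := (Matrix.exists_mulVec_eq_zero_iff).mpr hdet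
    exact ⟨x, hx0, hx⟩
  · exfalso
    have hpd : M.PosDef := by
      refine .of_dotProduct_mulVec_pos hl.1 fun x hx => (hl.dotProduct_mulVec_nonneg x).lt_of_ne fun h0 => ?_
      exact hdet (Matrix.exists_mulVec_eq_zero_iff.mp
        ⟨x, hx, (hl.dotProduct_mulVec_zero_iff x).mp h0.symm⟩)
    obtain ⟨ε, hε, hMε⟩ := posDef_sub_smul_one hpd
    obtain ⟨c, hc, hcγ⟩ := smul_one_sub_herm hγ.isHermitian
    set δ := ε / (c + 1) with hδdef
    have hc1 : (0 : ℝ) < c + 1 := by linarith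
    have hδ : 0 < δ := div_pos hε hc1
    have hεδ : δ * (c + 1) = ε := div_mul_cancel₀ _ (ne_of_gt hc1)
    have hM' : (M - ((δ * (c + 1) : ℝ) : ℂ) • 1).PosSemidef := by rw [hεδ]; exact hMε
    have key : ((l - δ : ℝ) : ℂ) • γ - ρ
        = (M - ((δ * (c + 1) : ℝ) : ℂ) • 1) + ((δ : ℝ) : ℂ) • ((c : ℂ) • 1 - γ)
          + ((δ : ℝ) : ℂ) • (1 : Matrix n n ℂ) := by
      rw [hMdef]
      push_cast
      module
    have hmem : (((l - δ : ℝ) : ℂ) • γ - ρ).PosSemidef := by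
      rw [key]
      exact ((hM'.add (psd_smul_real hcγ hδ.le)).add (psd_smul_real Matrix.PosSemidef.one hδ.le))
    have := hmin _ hmem
    linarith

end SLemmas

/-- `ρ` is a density matrix: positive semidefinite with unit trace. -/
def IsDensity {n : Type*} [Fintype n] [DecidableEq n] (ρ : Matrix n n ℂ) : Prop :=
  ρ.PosSemidef ∧ ρ.trace = 1

/-- Multiplicativity of the robustness of athermality under tensor products:
`min{λ | ρ_A ⊗ ρ_B ≤ λ(γ_A ⊗ γ_B)} = min{λ | ρ_A ≤ λγ_A} · min{λ | ρ_B ≤ λγ_B}`. -/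
theorem robustness_athermality_multiplicative
    {a b : Type*} [Fintype a] [DecidableEq a] [Fintype b] [DecidableEq b]
    (γA ρA : Matrix a a ℂ) (γB ρB : Matrix b b ℂ)
    (hA : γA.PosDef) (hAtr : γA.trace = 1) (hB : γB.PosDef) (hBtr : γB.trace = 1)
    (hρA : IsDensity ρA) (hρB : IsDensity ρB) :
    sInf {l : ℝ | ((l : ℂ) • (γA ⊗ₖ γB) - ρA ⊗ₖ ρB).PosSemidef}
      = sInf {l : ℝ | ((l : ℂ) • γA - ρA).PosSemidef}
        * sInf {l : ℝ | ((l : ℂ) • γB - ρB).PosSemidef} := by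
  obtain ⟨hρAp, hρAtr⟩ := hρA
  obtain ⟨hρBp, hρBtr⟩ := hρB
  have hna : Nonempty a := by
    by_contra h
    rw [not_nonempty_iff] at h
    rw [trace, Finset.univ_eq_empty, Finset.sum_empty] at hAtr
    exact zero_ne_one hAtr
  have hnb : Nonempty b := by
    by_contra h
    rw [not_nonempty_iff] at h
    rw [trace, Finset.univ_eq_empty, Finset.sum_empty] at hBtr
    exact zero_ne_one hBtr
  set SA := {l : ℝ | ((l : ℂ) • γA - ρA).PosSemidef} with hSAdef
  set SB := {l : ℝ | ((l : ℂ) • γB - ρB).PosSemidef} with hSBdef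
  set SAB := {l : ℝ | ((l : ℂ) • (γA ⊗ₖ γB) - ρA ⊗ₖ ρB).PosSemidef} with hSABdef
  have hSAne : SA.Nonempty := S_nonempty hA hρAp.isHermitian
  have hSBne : SB.Nonempty := S_nonempty hB hρBp.isHermitian
  have hSAbdd : BddBelow SA := ⟨1, fun l hl => S_one_le hAtr hρAtr hl⟩
  have hSBbdd : BddBelow SB := ⟨1, fun l hl => S_one_le hBtr hρBtr hl⟩
  have hABtr : (γA ⊗ₖ γB).trace = 1 := by rw [trace_kronecker, hAtr, hBtr, mul_one]
  have hρABtr : (ρA ⊗ₖ ρB).trace = 1 := by rw [trace_kronecker, hρAtr, hρBtr, mul_one]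
  have hSABbdd : BddBelow SAB := ⟨1, fun l hl => S_one_le hABtr hρABtr hl⟩
  set lA := sInf SA with hlAdef
  set lB := sInf SB with hlBdef
  have hlAmem : lA ∈ SA := (S_closed hA.posSemidef hρAp).csInf_mem hSAne hSAbdd
  have hlBmem : lB ∈ SB := (S_closed hB.posSemidef hρBp).csInf_mem hSBne hSBbdd
  have hlA1 : (1 : ℝ) ≤ lA := S_one_le hAtr hρAtr hlAmem
  have hlB1 : (1 : ℝ) ≤ lB := S_one_le hBtr hρBtr hlBmem
  -- upper bound : lA * lB ∈ SAB
  have hprod_mem : lA * lB ∈ SAB := by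
    have key : ((lA * lB : ℝ) : ℂ) • (γA ⊗ₖ γB) - ρA ⊗ₖ ρB
        = ((lA : ℂ) • γA - ρA) ⊗ₖ ((lB : ℂ) • γB) + ρA ⊗ₖ ((lB : ℂ) • γB - ρB) := by
      ext ⟨i, j⟩ ⟨k, l⟩
      simp only [Matrix.sub_apply, Matrix.add_apply, Matrix.smul_apply, smul_eq_mul,
        kroneckerMap_apply]
      push_cast
      ring
    show (((lA * lB : ℝ) : ℂ) • (γA ⊗ₖ γB) - ρA ⊗ₖ ρB).PosSemidef
    rw [key]
    exact (posSemidef_kron hlAmem (psd_smul_real hB.posSemidef (by linarith))).add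
      (posSemidef_kron hρAp hlBmem)
  have hSABne : SAB.Nonempty := ⟨lA * lB, hprod_mem⟩
  have hup : sInf SAB ≤ lA * lB := csInf_le hSABbdd hprod_mem
  -- lower bound
  have hlow : lA * lB ≤ sInf SAB := by
    refine le_csInf hSABne fun l hl => ?_
    obtain ⟨x, hx0, hxker⟩ := S_min_kernel hA hρAp hlAmem fun l' hl' => csInf_le hSAbdd hl'
    obtain ⟨y, hy0, hyker⟩ := S_min_kernel hB hρBp hlBmem fun l' hl' => csInf_le hSBbdd hl'
    have hρAx : ρA.mulVec x = (lA : ℂ) • γA.mulVec x := by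
      rw [sub_mulVec, smul_mulVec, sub_eq_zero] at hxker
      exact hxker.symm
    have hρBy : ρB.mulVec y = (lB : ℂ) • γB.mulVec y := by
      rw [sub_mulVec, smul_mulVec, sub_eq_zero] at hyker
      exact hyker.symm
    set qA := star x ⬝ᵥ γA.mulVec x with hqAdef
    set qB := star y ⬝ᵥ γB.mulVec y with hqBdef
    have hqA : 0 < qA := hA.dotProduct_mulVec_pos hx0
    have hqB : 0 < qB := hB.dotProduct_mulVec_pos hy0
    have h := hl.dotProduct_mulVec_nonneg (fun p : a × b => x p.1 * y p.2)
    rw [S_quad_expand, kron_quad, kron_quad, hρAx, hρBy, dotProduct_smul, dotProduct_smul,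
      smul_eq_mul, smul_eq_mul] at h
    have hfact : (l : ℂ) * (qA * qB) - (lA : ℂ) * qA * ((lB : ℂ) * qB)
        = ((l : ℂ) - (lA : ℂ) * (lB : ℂ)) * (qA * qB) := by ring
    rw [hfact] at h
    by_contra hlt
    push_neg at hlt
    have hneg : ((l : ℂ) - (lA : ℂ) * (lB : ℂ)) < 0 := by
      have : ((l - lA * lB : ℝ) : ℂ) < 0 := by
        rw [show (0 : ℂ) = ((0 : ℝ) : ℂ) by norm_num, Complex.real_lt_real]
        linarith
      calc (l : ℂ) - (lA : ℂ) * (lB : ℂ) = ((l - lA * lB : ℝ) : ℂ) := by push_cast; ring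
        _ < 0 := this
    have := mul_neg_of_neg_of_pos hneg (mul_pos hqA hqB)
    exact absurd (h.trans_lt this) (lt_irrefl 0)
  linarith
end

section
/- Continuity of the robustness of athermality: for any two density matrices ρ, σ and full-rank density matrix γ on a finite-dimensional space, |min{λ | ρ ≤ λγ} − min{λ | σ ≤ λγ}| ≤ (1/(2 g_min)) ‖ρ − σ‖_1, where g_min is the smallest eigenvalue of γ and ‖·‖_1 is the trace norm. -/
open Matrix ComplexOrder

private lemma trace_eq_sum_eigs {n : Type*} [Fintype n] [DecidableEq n]
    {A : Matrix n n ℂ} (hA : A.IsHermitian) :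
    A.trace = ∑ i, (hA.eigenvalues i : ℂ) := by
  conv_lhs => rw [hA.spectral_theorem, Unitary.conjStarAlgAut_apply]
  rw [Matrix.trace_mul_cycle]
  have h1 : (star (hA.eigenvectorUnitary : Matrix n n ℂ)) *
      (hA.eigenvectorUnitary : Matrix n n ℂ) = 1 :=
    Matrix.mem_unitaryGroup_iff'.mp (hA.eigenvectorUnitary).2
  rw [h1, one_mul, Matrix.trace_diagonal]
  rfl

private lemma aux_psd {n : Type*} [Fintype n] [DecidableEq n]
    {A : Matrix n n ℂ} (hA : A.IsHermitian) (a b : ℝ)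
    (h : ∀ i, 0 ≤ a * hA.eigenvalues i + b) :
    ((a : ℂ) • A + (b : ℂ) • 1).PosSemidef := by
  have hU : (hA.eigenvectorUnitary : Matrix n n ℂ) *
      (star (hA.eigenvectorUnitary : Matrix n n ℂ)) = 1 :=
    Matrix.mem_unitaryGroup_iff.mp (hA.eigenvectorUnitary).2
  have key : (a : ℂ) • A + (b : ℂ) • 1
      = (hA.eigenvectorUnitary : Matrix n n ℂ) *
          (Matrix.diagonal (fun i => ((a * hA.eigenvalues i + b : ℝ) : ℂ))) *
          (star (hA.eigenvectorUnitary : Matrix n n ℂ)) := by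
    have hD : (Matrix.diagonal (fun i => ((a * hA.eigenvalues i + b : ℝ) : ℂ)))
        = (a : ℂ) • Matrix.diagonal (RCLike.ofReal ∘ hA.eigenvalues) + (b : ℂ) • 1 := by
      rw [← Matrix.diagonal_one, ← Matrix.diagonal_smul, ← Matrix.diagonal_smul,
        Matrix.diagonal_add]
      ext i j
      rcases eq_or_ne i j with rfl | hij
      · simp only [Matrix.diagonal_apply_eq, Pi.add_apply, Pi.smul_apply,
          Function.comp_apply, smul_eq_mul, mul_one]
        push_cast
        rfl
      · simp [Matrix.diagonal_apply_ne _ hij]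
    rw [hD, Matrix.mul_add, Matrix.add_mul, Matrix.mul_smul, Matrix.smul_mul,
      Matrix.mul_smul, Matrix.smul_mul, ← Unitary.conjStarAlgAut_apply (R := Matrix n n ℂ) (S := ℂ),
      ← hA.spectral_theorem, mul_one, hU]
  rw [key]
  have hdiag : (Matrix.diagonal (fun i => ((a * hA.eigenvalues i + b : ℝ) : ℂ))).PosSemidef :=
    Matrix.posSemidef_diagonal_iff.mpr fun i => Complex.zero_le_real.mpr (h i)
  simpa [Matrix.star_eq_conjTranspose] using
    hdiag.mul_mul_conjTranspose_same (hA.eigenvectorUnitary : Matrix n n ℂ)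

/-- Continuity of the robustness of athermality:
`|min{λ | ρ ≤ λγ} − min{λ | σ ≤ λγ}| ≤ ‖ρ − σ‖₁ / (2 g_min)`, where `g_min` is the
smallest eigenvalue of `γ` and `‖·‖₁` is the trace norm (sum of absolute values of
eigenvalues of the Hermitian matrix `ρ − σ`). -/
theorem robustness_athermality_continuity
    {n : Type*} [Fintype n] [DecidableEq n] [Nonempty n]
    (γ ρ σ : Matrix n n ℂ) (hγ : γ.PosDef) (hγtr : γ.trace = 1)
    (hρ : IsDensity ρ) (hσ : IsDensity σ) :
    |sInf {l : ℝ | ((l : ℂ) • γ - ρ).PosSemidef}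
        - sInf {l : ℝ | ((l : ℂ) • γ - σ).PosSemidef}|
      ≤ (1 / (2 * ⨅ i, hγ.1.eigenvalues i))
          * ∑ i, |(hρ.1.1.sub hσ.1.1).eigenvalues i| := by
  set g : ℝ := ⨅ i, hγ.1.eigenvalues i with hg_def
  set t : ℝ := ∑ i, |(hρ.1.1.sub hσ.1.1).eigenvalues i| with ht_def
  set δ : ℝ := (1 / (2 * g)) * t with hδ_def
  have hg_le : ∀ i, g ≤ hγ.1.eigenvalues i := fun i =>
    ciInf_le (Finite.bddBelow_range _) i
  have hg_pos : 0 < g := by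
    obtain ⟨i0, hi0⟩ := exists_eq_ciInf_of_finite (f := hγ.1.eigenvalues)
    rw [hg_def, ← hi0]
    exact hγ.eigenvalues_pos i0
  have ht_nonneg : 0 ≤ t := Finset.sum_nonneg fun i _ => abs_nonneg _
  have hδ_nonneg : 0 ≤ δ := by positivity
  have hδg : δ * g = t / 2 := by
    field_simp [hδ_def]
    rw [hδ_def]
    field_simp
  -- eigenvalue bound for the difference
  have hμ : ∀ i, |(hρ.1.1.sub hσ.1.1).eigenvalues i| ≤ t / 2 := by
    set μ := (hρ.1.1.sub hσ.1.1).eigenvalues with hμdef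
    have hsumC : ((∑ i, μ i : ℝ) : ℂ) = 0 := by
      push_cast
      rw [← trace_eq_sum_eigs (hρ.1.1.sub hσ.1.1), Matrix.trace_sub, hρ.2, hσ.2, sub_self]
    have hsum : (∑ i, μ i) = 0 := by exact_mod_cast hsumC
    intro i
    have h1 : μ i + ∑ j ∈ Finset.univ.erase i, μ j = 0 := by
      rw [add_comm, Finset.sum_erase_add _ _ (Finset.mem_univ i)]
      exact hsum
    have h2 : |μ i| = |∑ j ∈ Finset.univ.erase i, μ j| := by
      have : μ i = -(∑ j ∈ Finset.univ.erase i, μ j) := by linarith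
      rw [this, abs_neg]
    have h3 : |∑ j ∈ Finset.univ.erase i, μ j| ≤ ∑ j ∈ Finset.univ.erase i, |μ j| :=
      Finset.abs_sum_le_sum_abs _ _
    have h4 : |μ i| + ∑ j ∈ Finset.univ.erase i, |μ j| = t := by
      rw [ht_def, add_comm, Finset.sum_erase_add _ _ (Finset.mem_univ i)]
    linarith
  -- the two PSD "half trace-norm" bounds
  have hPSD1 : (((t / 2 : ℝ) : ℂ) • 1 - (ρ - σ)).PosSemidef := by
    have := aux_psd (hρ.1.1.sub hσ.1.1) (-1) (t / 2) (fun i => by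
      have := hμ i
      have := abs_le.mp this
      linarith [this.2])
    have heq : ((-1 : ℝ) : ℂ) • (ρ - σ) + ((t / 2 : ℝ) : ℂ) • 1
        = ((t / 2 : ℝ) : ℂ) • 1 - (ρ - σ) := by
      push_cast
      module
    rwa [heq] at this
  have hPSD2 : (((t / 2 : ℝ) : ℂ) • 1 - (σ - ρ)).PosSemidef := by
    have := aux_psd (hρ.1.1.sub hσ.1.1) 1 (t / 2) (fun i => by
      have := abs_le.mp (hμ i)
      linarith [this.1])
    have heq : ((1 : ℝ) : ℂ) • (ρ - σ) + ((t / 2 : ℝ) : ℂ) • 1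
        = ((t / 2 : ℝ) : ℂ) • 1 - (σ - ρ) := by
      push_cast
      module
    rwa [heq] at this
  -- key one-sided estimate
  have key : ∀ ρ₁ ρ₂ : Matrix n n ℂ, IsDensity ρ₁ → IsDensity ρ₂ →
      (((t / 2 : ℝ) : ℂ) • 1 - (ρ₁ - ρ₂)).PosSemidef →
      sInf {l : ℝ | ((l : ℂ) • γ - ρ₁).PosSemidef}
        ≤ sInf {l : ℝ | ((l : ℂ) • γ - ρ₂).PosSemidef} + δ := by
    intro ρ₁ ρ₂ h₁ h₂ hPSD
    -- nonemptiness of the ρ₂ set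
    have hsum₂C : ((∑ i, h₂.1.1.eigenvalues i : ℝ) : ℂ) = 1 := by
      push_cast
      rw [← trace_eq_sum_eigs h₂.1.1]
      exact h₂.2
    have hsum₂ : (∑ i, h₂.1.1.eigenvalues i) = 1 := by exact_mod_cast hsum₂C
    have heig₂ : ∀ i, h₂.1.1.eigenvalues i ≤ 1 := by
      intro i
      rw [← hsum₂]
      exact Finset.single_le_sum (fun j _ => h₂.1.eigenvalues_nonneg j) (Finset.mem_univ i)
    have hne₂ : {l : ℝ | ((l : ℂ) • γ - ρ₂).PosSemidef}.Nonempty := by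
      refine ⟨1 / g, ?_⟩
      have hA : (((1 / g : ℝ) : ℂ) • γ + ((-1 : ℝ) : ℂ) • 1).PosSemidef :=
        aux_psd hγ.1 (1 / g) (-1) (fun i => by
          have h1 : (1 : ℝ) ≤ (1 / g) * hγ.1.eigenvalues i := by
            rw [div_mul_eq_mul_div, one_mul, le_div_iff₀ hg_pos, one_mul]
            exact hg_le i
          linarith)
      have hB : (((-1 : ℝ) : ℂ) • ρ₂ + ((1 : ℝ) : ℂ) • 1).PosSemidef :=
        aux_psd h₂.1.1 (-1) 1 (fun i => by have := heig₂ i; linarith)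
      have heq : ((1 / g : ℝ) : ℂ) • γ - ρ₂
          = (((1 / g : ℝ) : ℂ) • γ + ((-1 : ℝ) : ℂ) • 1)
            + (((-1 : ℝ) : ℂ) • ρ₂ + ((1 : ℝ) : ℂ) • 1) := by
        push_cast
        module
      show (((1 / g : ℝ) : ℂ) • γ - ρ₂).PosSemidef
      rw [heq]
      exact hA.add hB
    -- lower bound for the ρ₁ set
    have hbdd₁ : BddBelow {l : ℝ | ((l : ℂ) • γ - ρ₁).PosSemidef} := by
      refine ⟨1, fun l hl => ?_⟩
      have htr : ((l : ℂ) • γ - ρ₁).trace = ((l - 1 : ℝ) : ℂ) := by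
        rw [Matrix.trace_sub, Matrix.trace_smul, hγtr, h₁.2]
        push_cast
        simp
      have htr2 : ((l : ℂ) • γ - ρ₁).trace
          = ((∑ i, hl.1.eigenvalues i : ℝ) : ℂ) := by
        rw [trace_eq_sum_eigs hl.1]
        push_cast
        rfl
      have hsum := htr.symm.trans htr2
      have hsumR : l - 1 = ∑ i, hl.1.eigenvalues i := by exact_mod_cast hsum
      have hnn : 0 ≤ ∑ i, hl.1.eigenvalues i :=
        Finset.sum_nonneg fun i _ => hl.eigenvalues_nonneg i
      linarith
    rw [← sub_le_iff_le_add]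
    refine le_csInf hne₂ fun l hl => ?_
    rw [sub_le_iff_le_add]
    refine csInf_le hbdd₁ ?_
    show (((l + δ : ℝ) : ℂ) • γ - ρ₁).PosSemidef
    have hA : ((δ : ℂ) • γ + ((-(δ * g) : ℝ) : ℂ) • 1).PosSemidef :=
      aux_psd hγ.1 δ (-(δ * g)) (fun i => by
        have := hg_le i
        nlinarith)
    have heq : ((l + δ : ℝ) : ℂ) • γ - ρ₁
        = ((l : ℂ) • γ - ρ₂) + ((δ : ℂ) • γ + ((-(δ * g) : ℝ) : ℂ) • 1)
          + (((δ * g : ℝ) : ℂ) • 1 - (ρ₁ - ρ₂)) := by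
      push_cast
      module
    rw [heq]
    have hPSD' : (((δ * g : ℝ) : ℂ) • 1 - (ρ₁ - ρ₂)).PosSemidef := by
      rw [hδg]
      exact hPSD
    exact ((hl.add hA).add hPSD')
  rw [abs_sub_le_iff]
  constructor
  · have := key ρ σ hρ hσ hPSD1
    linarith
  · have := key σ ρ hσ hρ hPSD2
    linarith
end

section
/- Equivalence of dynamical and static athermality: for a CPTP map Λ from A to B and full-rank density matrices γ_A, γ_B, the infimum of λ such that λG − Λ is completely positive for some CPTP map G with G(γ_A) = γ_B equals min{λ | Λ(γ_A) ≤ λγ_B}. -/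
open Matrix ComplexOrder

/-- The Choi matrix of a linear map on matrices. -/
def choiMat {n m : Type*} [Fintype n] [DecidableEq n] [Fintype m] [DecidableEq m]
    (Φ : Matrix n n ℂ →ₗ[ℂ] Matrix m m ℂ) : Matrix (n × m) (n × m) ℂ :=
  Matrix.of fun p q => Φ (Matrix.single p.1 q.1 1) p.2 q.2

/-- A map is CPTP iff its Choi matrix is positive semidefinite and it preserves traces. -/
def IsCPTP {n m : Type*} [Fintype n] [DecidableEq n] [Fintype m] [DecidableEq m]
    (Φ : Matrix n n ℂ →ₗ[ℂ] Matrix m m ℂ) : Prop :=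
  (choiMat Φ).PosSemidef ∧ ∀ X : Matrix n n ℂ, (Φ X).trace = X.trace

section Aux

set_option linter.unusedSectionVars false

variable {n m : Type*} [Fintype n] [DecidableEq n] [Fintype m] [DecidableEq m]

lemma choiMat_smul' (c : ℂ) (Φ : Matrix n n ℂ →ₗ[ℂ] Matrix m m ℂ) :
    choiMat (c • Φ) = c • choiMat Φ := by
  ext p q; simp [choiMat]

lemma choiMat_sub' (Φ Ψ : Matrix n n ℂ →ₗ[ℂ] Matrix m m ℂ) :
    choiMat (Φ - Ψ) = choiMat Φ - choiMat Ψ := by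
  ext p q; simp [choiMat]

lemma choiMat_add' (Φ Ψ : Matrix n n ℂ →ₗ[ℂ] Matrix m m ℂ) :
    choiMat (Φ + Ψ) = choiMat Φ + choiMat Ψ := by
  ext p q; simp [choiMat]

/-- Entrywise formula for `Φ ρ` via the Choi matrix. -/
lemma apply_eq_sum' (Φ : Matrix n n ℂ →ₗ[ℂ] Matrix m m ℂ) (ρ : Matrix n n ℂ) (k l : m) :
    Φ ρ k l = ∑ i, ∑ j, ρ i j * choiMat Φ (i, k) (j, l) := by
  conv_lhs => rw [Matrix.matrix_eq_sum_single ρ]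
  rw [map_sum]
  simp only [Matrix.sum_apply]
  refine Finset.sum_congr rfl fun i _ => ?_
  rw [map_sum]
  simp only [Matrix.sum_apply]
  refine Finset.sum_congr rfl fun j _ => ?_
  have h1 : Matrix.single i j (ρ i j) = ρ i j • Matrix.single i j 1 := by
    rw [Matrix.smul_single]; simp
  rw [h1, LinearMap.map_smul]
  simp [choiMat]

/-- Completely positive maps are positive. -/
lemma cp_pos' (Φ : Matrix n n ℂ →ₗ[ℂ] Matrix m m ℂ) (hΦ : (choiMat Φ).PosSemidef)
    {ρ : Matrix n n ℂ} (hρ : ρ.PosSemidef) : (Φ ρ).PosSemidef := by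
  obtain ⟨B, rfl⟩ : ∃ B : Matrix n n ℂ, ρ = Bᴴ * B := by
    open scoped MatrixOrder in
    obtain ⟨B, rfl⟩ := CStarAlgebra.nonneg_iff_eq_star_mul_self.mp hρ.nonneg
    exact ⟨B, rfl⟩
  set W : n → Matrix (n × m) m ℂ :=
    fun s => Matrix.of fun p k => B s p.1 * (if p.2 = k then 1 else 0) with hW
  have hentry : ∀ (s : n) (k l : m), ((W s)ᴴ * choiMat Φ * W s) k l
      = ∑ i, ∑ j, star (B s i) * choiMat Φ (i, k) (j, l) * B s j := by
    intro s k l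
    simp only [Matrix.mul_apply, Matrix.conjTranspose_apply, hW, Matrix.of_apply,
      Fintype.sum_prod_type, star_mul', apply_ite (star : ℂ → ℂ), star_one, star_zero,
      mul_ite, mul_zero, mul_one, ite_mul, zero_mul, Finset.sum_ite_eq', Finset.mem_univ,
      if_true, Finset.sum_mul, Finset.mul_sum]
    exact Finset.sum_comm
  have key : Φ (Bᴴ * B) = ∑ s : n, (W s)ᴴ * choiMat Φ * (W s) := by
    ext k l
    rw [apply_eq_sum', Matrix.sum_apply]
    simp only [hentry]
    have h2 : ∀ i j, (Bᴴ * B) i j * choiMat Φ (i, k) (j, l)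
        = ∑ s, star (B s i) * choiMat Φ (i, k) (j, l) * B s j := by
      intro i j
      rw [Matrix.mul_apply, Finset.sum_mul]
      refine Finset.sum_congr rfl fun s _ => ?_
      simp only [Matrix.conjTranspose_apply]
      ring
    simp only [h2]
    calc ∑ i, ∑ j, ∑ s, star (B s i) * choiMat Φ (i, k) (j, l) * B s j
        = ∑ i, ∑ s, ∑ j, star (B s i) * choiMat Φ (i, k) (j, l) * B s j :=
          Finset.sum_congr rfl fun i _ => Finset.sum_comm
      _ = ∑ s, ∑ i, ∑ j, star (B s i) * choiMat Φ (i, k) (j, l) * B s j := Finset.sum_comm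
  rw [key]
  exact Finset.sum_induction _ _ (fun x y hx hy => hx.add hy) (Matrix.PosSemidef.zero)
    (fun s _ => hΦ.conjTranspose_mul_mul_same _)

/-- The map `X ↦ (tr X) • τ`. -/
noncomputable def traceMap (τ : Matrix m m ℂ) : Matrix n n ℂ →ₗ[ℂ] Matrix m m ℂ where
  toFun X := X.trace • τ
  map_add' X Y := by simp [Matrix.trace_add, add_smul]
  map_smul' c X := by simp [Matrix.trace_smul, smul_smul]

lemma traceMap_apply (τ : Matrix m m ℂ) (X : Matrix n n ℂ) :
    traceMap (n := n) τ X = X.trace • τ := rfl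

lemma traceMap_smul (c : ℂ) (τ : Matrix m m ℂ) :
    traceMap (n := n) (c • τ) = c • traceMap τ :=
  LinearMap.ext fun X => by
    simp only [traceMap_apply, LinearMap.smul_apply]
    rw [smul_comm]

lemma choiMat_traceMap (τ : Matrix m m ℂ) (p q : n × m) :
    choiMat (traceMap τ) p q = (if p.1 = q.1 then 1 else 0) * τ p.2 q.2 := by
  simp only [choiMat, Matrix.of_apply, traceMap_apply, Matrix.smul_apply, smul_eq_mul]
  congr 1
  simp only [Matrix.trace, Matrix.diag, Matrix.single, Matrix.of_apply]
  split_ifs with h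
  · rw [h]; simp
  · rw [Finset.sum_eq_zero]; intro i _
    rw [if_neg]; rintro ⟨h1, h2⟩; exact h (h1.trans h2.symm)

lemma choiMat_traceMap_posSemidef {τ : Matrix m m ℂ} (hτ : τ.PosSemidef) :
    (choiMat (traceMap (n := n) τ)).PosSemidef := by
  refine posSemidef_iff_dotProduct_mulVec.mpr ⟨?_, ?_⟩
  · ext p q
    rw [Matrix.conjTranspose_apply, choiMat_traceMap, choiMat_traceMap]
    have hst : star (τ q.2 p.2) = τ p.2 q.2 := by
      conv_rhs => rw [← hτ.isHermitian.eq]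
      simp [Matrix.conjTranspose_apply]
    by_cases h : p.1 = q.1
    · simp [h, hst]
    · have h' : ¬ q.1 = p.1 := fun hh => h hh.symm
      simp [h, h']
  · intro x
    have key : star x ⬝ᵥ choiMat (traceMap (n := n) τ) *ᵥ x
        = ∑ i : n, (star fun k => x (i, k)) ⬝ᵥ τ *ᵥ (fun k => x (i, k)) := by
      simp only [dotProduct, Matrix.mulVec, Pi.star_apply, Fintype.sum_prod_type,
        choiMat_traceMap, ite_mul, one_mul, zero_mul, mul_ite, mul_zero]
      refine Finset.sum_congr rfl fun i _ => Finset.sum_congr rfl fun k _ => ?_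
      rw [Finset.sum_comm]
      simp [Finset.mul_sum]
    rw [key]
    exact Finset.sum_nonneg fun i _ => hτ.dotProduct_mulVec_nonneg _

lemma posSemidef_smul_real {M : Matrix m m ℂ} (hM : M.PosSemidef) {c : ℝ} (hc : 0 ≤ c) :
    ((c : ℂ) • M).PosSemidef := by
  refine posSemidef_iff_dotProduct_mulVec.mpr ⟨?_, ?_⟩
  · rw [Matrix.IsHermitian, Matrix.conjTranspose_smul, hM.isHermitian.eq]
    simp
  · intro x
    rw [Matrix.smul_mulVec, dotProduct_smul]
    exact mul_nonneg (by exact_mod_cast Complex.zero_le_real.mpr hc) (hM.dotProduct_mulVec_nonneg x)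

lemma trace_nonneg_of_posSemidef {M : Matrix m m ℂ} (hM : M.PosSemidef) : 0 ≤ M.trace := by
  rw [Matrix.trace]
  refine Finset.sum_nonneg fun i _ => ?_
  have := hM.dotProduct_mulVec_nonneg (Pi.single i 1)
  simpa [dotProduct, Matrix.mulVec, Pi.single_apply, Matrix.diag] using this

end Aux

/-- Equivalence between dynamical and static athermality:
the infimum of `λ` such that `λG − Λ` is completely positive for some
Gibbs-preserving channel `G` equals `min{λ | Λ(γ_A) ≤ λγ_B}`. -/
theorem dynamical_eq_static_athermality
    {a b : Type*} [Fintype a] [DecidableEq a] [Fintype b] [DecidableEq b]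
    (γA : Matrix a a ℂ) (γB : Matrix b b ℂ)
    (hA : γA.PosDef) (hAtr : γA.trace = 1) (hB : γB.PosDef) (hBtr : γB.trace = 1)
    (Λ : Matrix a a ℂ →ₗ[ℂ] Matrix b b ℂ) (hΛ : IsCPTP Λ) :
    sInf {l : ℝ | ∃ G : Matrix a a ℂ →ₗ[ℂ] Matrix b b ℂ,
        IsCPTP G ∧ G γA = γB ∧ ((l : ℂ) • choiMat G - choiMat Λ).PosSemidef}
      = sInf {l : ℝ | ((l : ℂ) • γB - Λ γA).PosSemidef} := by
  have hset : {l : ℝ | ∃ G : Matrix a a ℂ →ₗ[ℂ] Matrix b b ℂ,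
        IsCPTP G ∧ G γA = γB ∧ ((l : ℂ) • choiMat G - choiMat Λ).PosSemidef}
      = {l : ℝ | ((l : ℂ) • γB - Λ γA).PosSemidef} := by
    ext l
    constructor
    · rintro ⟨G, hG, hGγ, hPSD⟩
      have hch : choiMat ((l : ℂ) • G - Λ) = (l : ℂ) • choiMat G - choiMat Λ := by
        rw [choiMat_sub', choiMat_smul']
      have hpos := cp_pos' ((l : ℂ) • G - Λ) (hch ▸ hPSD) hA.posSemidef
      simpa [LinearMap.sub_apply, LinearMap.smul_apply, hGγ] using hpos
    · intro h
      have htr : ((l : ℂ) • γB - Λ γA).trace = (l : ℂ) - 1 := by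
        rw [Matrix.trace_sub, Matrix.trace_smul, hΛ.2 γA, hAtr, hBtr]
        simp
      have hl1 : (1 : ℝ) ≤ l := by
        have h0 := trace_nonneg_of_posSemidef h
        rw [htr] at h0
        have : ((0 : ℝ) : ℂ) ≤ ((l - 1 : ℝ) : ℂ) := by push_cast; simpa using h0
        linarith [Complex.real_le_real.mp this]
      have hl0 : (0 : ℝ) < l := lt_of_lt_of_le one_pos hl1
      have hlne : (l : ℂ) ≠ 0 := by exact_mod_cast hl0.ne'
      set τ : Matrix b b ℂ := γB - (l : ℂ)⁻¹ • Λ γA with hτdef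
      have hτeq : (l : ℂ) • τ = (l : ℂ) • γB - Λ γA := by
        rw [hτdef, smul_sub, smul_smul, mul_inv_cancel₀ hlne, one_smul]
      have hτ : τ.PosSemidef := by
        have : τ = (l : ℂ)⁻¹ • ((l : ℂ) • γB - Λ γA) := by
          rw [← hτeq, smul_smul, inv_mul_cancel₀ hlne, one_smul]
        rw [this, show ((l : ℂ))⁻¹ = ((l⁻¹ : ℝ) : ℂ) by push_cast; ring]
        exact posSemidef_smul_real h (inv_nonneg.mpr hl0.le)
      refine ⟨(l : ℂ)⁻¹ • Λ + traceMap τ, ⟨?_, ?_⟩, ?_, ?_⟩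
      · rw [choiMat_add', choiMat_smul',
          show ((l : ℂ))⁻¹ = ((l⁻¹ : ℝ) : ℂ) by push_cast; ring]
        exact (posSemidef_smul_real hΛ.1 (inv_nonneg.mpr hl0.le)).add
          (choiMat_traceMap_posSemidef hτ)
      · intro X
        have hτtr : τ.trace = 1 - (l : ℂ)⁻¹ := by
          rw [hτdef, Matrix.trace_sub, Matrix.trace_smul, hΛ.2 γA, hAtr, hBtr]
          simp
        simp only [LinearMap.add_apply, LinearMap.smul_apply, traceMap_apply,
          Matrix.trace_add, Matrix.trace_smul, hΛ.2 X, hτtr, smul_eq_mul]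
        ring
      · simp only [LinearMap.add_apply, LinearMap.smul_apply, traceMap_apply, hAtr, one_smul,
          hτdef]
        module
      · have hch : (l : ℂ) • choiMat ((l : ℂ)⁻¹ • Λ + traceMap τ) - choiMat Λ
            = choiMat (traceMap ((l : ℂ) • τ)) := by
          rw [choiMat_add', choiMat_smul', smul_add, smul_smul, mul_inv_cancel₀ hlne,
            one_smul, traceMap_smul, choiMat_smul', add_sub_cancel_left]
        rw [hch, hτeq]
        exact choiMat_traceMap_posSemidef h
  rw [hset]
end

section
/- Let γ be a positive-definite density matrix on C^d and |φ^+⟩ = Σ_{i=0}^{d−1}|i⟩⊗|i⟩ the unnormalized maximally entangled vector in the eigenbasis of γ. Then min{λ | |φ^+⟩⟨φ^+| ≤ λ (𝟙 ⊗ γ)} = Tr(γ^{-1}). -/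
open Matrix ComplexOrder Kronecker

/-- The unnormalized maximally entangled projector `|φ⁺⟩⟨φ⁺|`,
with `|φ⁺⟩ = Σ_i |i⟩⊗|i⟩`. -/
def phiPlusProj (d : ℕ) : Matrix (Fin d × Fin d) (Fin d × Fin d) ℂ :=
  Matrix.of fun p q => if p.1 = p.2 ∧ q.1 = q.2 then 1 else 0

lemma kron_diag (d : ℕ) (gc : Fin d → ℂ) :
    (1 : Matrix (Fin d) (Fin d) ℂ) ⊗ₖ Matrix.diagonal gc
      = Matrix.diagonal (fun p : Fin d × Fin d => gc p.2) := by
  ext ⟨i,j⟩ ⟨k,l⟩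
  simp [Matrix.kroneckerMap_apply, Matrix.one_apply, Matrix.diagonal_apply, Prod.ext_iff]
  aesop

lemma phi_mulVec (d : ℕ) (x : Fin d × Fin d → ℂ) :
    (phiPlusProj d) *ᵥ x = fun p => if p.1 = p.2 then ∑ k, x (k,k) else 0 := by
  funext ⟨i,j⟩
  simp only [mulVec, dotProduct, phiPlusProj, of_apply]
  by_cases h : i = j
  · simp [h, Fintype.sum_prod_type, Finset.sum_ite_eq]
  · simp [h]

lemma quad (d : ℕ) (g : Fin d → ℝ) (l : ℝ) (x : Fin d × Fin d → ℂ) :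
    star x ⬝ᵥ (((l : ℂ) • ((1 : Matrix (Fin d) (Fin d) ℂ)
        ⊗ₖ (Matrix.diagonal fun i => (g i : ℂ))) - phiPlusProj d) *ᵥ x)
    = ((l * ∑ p : Fin d × Fin d, g p.2 * Complex.normSq (x p)
        - Complex.normSq (∑ k, x (k,k)) : ℝ) : ℂ) := by
  rw [kron_diag, sub_mulVec, dotProduct_sub, smul_mulVec, dotProduct_smul,
    phi_mulVec]
  have h1 : star x ⬝ᵥ (Matrix.diagonal (fun p : Fin d × Fin d => ((g p.2 : ℂ))) *ᵥ x)
      = ((∑ p : Fin d × Fin d, g p.2 * Complex.normSq (x p) : ℝ) : ℂ) := by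
    push_cast
    simp only [dotProduct, mulVec_diagonal, Pi.star_apply]
    refine Finset.sum_congr rfl fun p _ => ?_
    simp only [RCLike.star_def, Complex.normSq_eq_conj_mul_self]
    ring
  have h2 : star x ⬝ᵥ (fun p : Fin d × Fin d => if p.1 = p.2 then ∑ k, x (k,k) else 0)
      = ((Complex.normSq (∑ k, x (k,k)) : ℝ) : ℂ) := by
    simp only [dotProduct, Pi.star_apply, mul_ite, mul_zero]
    rw [Fintype.sum_prod_type]
    simp only [Finset.sum_ite_eq, Finset.mem_univ, if_true]
    simp only [RCLike.star_def]
    rw [← Finset.sum_mul, ← map_sum, ← Complex.normSq_eq_conj_mul_self]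
  rw [h1, h2, smul_eq_mul]
  push_cast
  ring

/-- For a positive-definite density matrix `γ = diag(g)` in its eigenbasis,
`min{λ | |φ⁺⟩⟨φ⁺| ≤ λ(𝟙 ⊗ γ)} = Tr(γ⁻¹) = Σ_i 1/g_i`. -/
theorem maximally_entangled_robustness {d : ℕ}
    (g : Fin d → ℝ) (hg : ∀ i, 0 < g i) (hsum : ∑ i, g i = 1) :
    sInf {l : ℝ | ((l : ℂ) • ((1 : Matrix (Fin d) (Fin d) ℂ)
        ⊗ₖ (Matrix.diagonal fun i => (g i : ℂ))) - phiPlusProj d).PosSemidef}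
      = ∑ i, (g i)⁻¹ := by
  have hd : 0 < d := by
    rcases Nat.eq_zero_or_pos d with h | h
    · subst h; simp at hsum
    · exact h
  have : Nonempty (Fin d) := ⟨⟨0, hd⟩⟩
  set T : ℝ := ∑ i, (g i)⁻¹ with hTdef
  have hT : 0 < T := Finset.sum_pos (fun i _ => inv_pos.2 (hg i)) Finset.univ_nonempty
  have hset : {l : ℝ | ((l : ℂ) • ((1 : Matrix (Fin d) (Fin d) ℂ)
        ⊗ₖ (Matrix.diagonal fun i => (g i : ℂ))) - phiPlusProj d).PosSemidef}
      = Set.Ici T := by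
    ext l
    simp only [Set.mem_setOf_eq, Set.mem_Ici]
    constructor
    · intro h
      set x : Fin d × Fin d → ℂ := fun p => if p.1 = p.2 then ((g p.1)⁻¹ : ℂ) else 0 with hx
      have h2 := h.dotProduct_mulVec_nonneg x
      rw [quad, Complex.zero_le_real] at h2
      have e1 : ∑ p : Fin d × Fin d, g p.2 * Complex.normSq (x p) = T := by
        rw [Fintype.sum_prod_type]
        simp only [hx, apply_ite Complex.normSq, Complex.normSq_zero, mul_ite, mul_zero,
          Finset.sum_ite_eq, Finset.mem_univ, if_true, Complex.normSq_ofReal]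
        exact Finset.sum_congr rfl fun i _ => by
          have := (hg i).ne'; rw [map_inv₀, Complex.normSq_ofReal]; field_simp
      have e2 : ∑ k, x (k,k) = (T : ℂ) := by
        simp only [hx, if_true, hTdef]
        push_cast
        rfl
      rw [e1, e2, Complex.normSq_ofReal] at h2
      nlinarith
    · intro h
      refine posSemidef_iff_dotProduct_mulVec.mpr ⟨?_, ?_⟩
      · rw [kron_diag]
        apply Matrix.IsHermitian.sub
        · rw [show ((l:ℂ) • Matrix.diagonal (fun p : Fin d × Fin d => ((g p.2 : ℂ))))
              = Matrix.diagonal (fun p : Fin d × Fin d => (l:ℂ) * (g p.2 : ℂ)) by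
            rw [← Matrix.diagonal_smul]; rfl]
          exact Matrix.isHermitian_diagonal_iff.2 fun p => by
            simp [_root_.IsSelfAdjoint, Complex.conj_ofReal]
        · show (phiPlusProj d)ᴴ = phiPlusProj d
          ext p q
          simp [phiPlusProj, conjTranspose_apply, and_comm]
      · intro x
        rw [quad, Complex.zero_le_real]
        set s : ℂ := ∑ k, x (k,k) with hs
        set A : ℝ := ∑ p : Fin d × Fin d, g p.2 * Complex.normSq (x p) with hA
        have hA0 : 0 ≤ A := Finset.sum_nonneg fun p _ =>
          mul_nonneg (hg p.2).le (Complex.normSq_nonneg _)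
        have habs : Complex.normSq s ≤ (∑ k, ‖x (k,k)‖)^2 := by
          rw [← Complex.sq_norm]
          have h1 : ‖s‖ ≤ ∑ k, ‖x (k,k)‖ :=
            norm_sum_le _ _
          exact pow_le_pow_left₀ (norm_nonneg _) h1 2
        have cs : (∑ k, ‖x (k,k)‖)^2
            ≤ T * ∑ k, g k * Complex.normSq (x (k,k)) := by
          have h2 := Finset.sum_mul_sq_le_sq_mul_sq Finset.univ
            (fun k => Real.sqrt (g k)⁻¹)
            (fun k => Real.sqrt (g k) * ‖x (k,k)‖)
          have e3 : ∀ k : Fin d, Real.sqrt (g k)⁻¹ * (Real.sqrt (g k) * ‖x (k,k)‖)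
              = ‖x (k,k)‖ := fun k => by
            rw [← mul_assoc, ← Real.sqrt_mul (inv_nonneg.2 (hg k).le),
              inv_mul_cancel₀ (hg k).ne', Real.sqrt_one, one_mul]
          have e4 : ∀ k : Fin d, Real.sqrt (g k)⁻¹ ^ 2 = (g k)⁻¹ := fun k =>
            Real.sq_sqrt (inv_nonneg.2 (hg k).le)
          have e5 : ∀ k : Fin d, (Real.sqrt (g k) * ‖x (k,k)‖)^2
              = g k * Complex.normSq (x (k,k)) := fun k => by
            rw [mul_pow, Real.sq_sqrt (hg k).le, Complex.sq_norm]
          simp only [e3, e4, e5] at h2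
          exact h2
        have hdiag : ∑ k, g k * Complex.normSq (x (k,k)) ≤ A := by
          rw [hA, Fintype.sum_prod_type]
          refine Finset.sum_le_sum fun i _ => ?_
          exact Finset.single_le_sum (f := fun j => g j * Complex.normSq (x (i,j)))
            (fun j _ => mul_nonneg (hg j).le (Complex.normSq_nonneg _)) (Finset.mem_univ i)
        have hTA : T * ∑ k, g k * Complex.normSq (x (k,k)) ≤ T * A :=
          mul_le_mul_of_nonneg_left hdiag hT.le
        nlinarith
  rw [hset, csInf_Ici]
end

section
/- Universal upper bound on the joint resource: for every CPTP map Λ from C^{d_A} to C^{d_B} with Choi matrix J_Λ = (I ⊗ Λ)(|φ^+⟩⟨φ^+|), and every positive-definite density matrix γ_B on C^{d_B}, one has J_Λ ≤ Tr(γ_B^{-1}) · (𝟙_A ⊗ γ_B). -/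
open Matrix ComplexOrder Kronecker

private lemma dot_sq {n : Type*} [Fintype n] (v : n → ℂ) :
    star v ⬝ᵥ v = ((‖(WithLp.equiv 2 (n → ℂ)).symm v‖ ^ 2 : ℝ) : ℂ) := by
  have h : star v ⬝ᵥ v = inner ℂ ((WithLp.equiv 2 (n → ℂ)).symm v) ((WithLp.equiv 2 (n → ℂ)).symm v) := by
    rw [dotProduct_comm]; rfl
  rw [h, inner_self_eq_norm_sq_to_K (𝕜 := ℂ)]
  norm_cast

private lemma key {a b : Type*} [Fintype a] [DecidableEq a] [Fintype b] [DecidableEq b]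
    (J : Matrix (a × b) (a × b) ℂ) (hJ : J.PosSemidef)
    (htr : ∀ p q : a, (∑ i, J (p, i) (q, i)) = if p = q then (1:ℂ) else 0)
    (g : b → ℝ) (hg : ∀ j, 0 < g j) (y : a × b → ℂ) :
    star y ⬝ᵥ (J *ᵥ y) ≤ (((∑ j, (g j)⁻¹) * ∑ p : a × b, g p.2 * ‖y p‖ ^ 2 : ℝ) : ℂ) := by
  obtain ⟨B, rfl⟩ : ∃ B : Matrix (a × b) (a × b) ℂ, J = Bᴴ * B := by
    open scoped MatrixOrder in exact CStarAlgebra.nonneg_iff_eq_star_mul_self.mp hJ.nonneg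
  have hq : ∀ v : a × b → ℂ, star v ⬝ᵥ ((Bᴴ * B) *ᵥ v) = star (B *ᵥ v) ⬝ᵥ (B *ᵥ v) := by
    intro v
    rw [← mulVec_mulVec, dotProduct_mulVec, ← star_mulVec]
  set e : (a → ℂ) → b → (a × b → ℂ) := fun u j p => if p.2 = j then u p.1 else 0 with he
  have identA : ∀ (u : a → ℂ) (j : b),
      star (e u j) ⬝ᵥ ((Bᴴ * B) *ᵥ (e u j))
        = ∑ q : a, ∑ q' : a, (starRingEnd ℂ) (u q) * u q' * (Bᴴ * B) (q, j) (q', j) := by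
    intro u j
    simp only [he, dotProduct, mulVec, Fintype.sum_prod_type, Pi.star_apply, RCLike.star_def,
      apply_ite (starRingEnd ℂ), map_zero, ite_mul, zero_mul, mul_ite, mul_zero]
    simp only [Finset.sum_ite_eq', Finset.mem_univ, if_true]
    refine Finset.sum_congr rfl fun q _ => ?_
    rw [Finset.mul_sum]
    exact Finset.sum_congr rfl fun q' _ => by ring
  have total : ∀ u : a → ℂ,
      ∑ j' : b, star (e u j') ⬝ᵥ ((Bᴴ * B) *ᵥ (e u j')) = ((∑ q, ‖u q‖ ^ 2 : ℝ) : ℂ) := by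
    intro u
    simp only [identA]
    rw [Finset.sum_comm]
    have : ∀ q : a, ∑ j' : b, ∑ q' : a,
        (starRingEnd ℂ) (u q) * u q' * (Bᴴ * B) (q, j') (q', j')
        = ((‖u q‖ ^ 2 : ℝ) : ℂ) := by
      intro q
      rw [Finset.sum_comm]
      have : ∀ q' : a, ∑ j' : b, (starRingEnd ℂ) (u q) * u q' * (Bᴴ * B) (q, j') (q', j')
          = (starRingEnd ℂ) (u q) * u q' * (if q = q' then (1:ℂ) else 0) := by
        intro q'
        rw [← Finset.mul_sum, htr q q']
      simp only [this, mul_ite, mul_one, mul_zero]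
      rw [Finset.sum_ite_eq]
      simp only [Finset.mem_univ, if_true]
      rw [mul_comm, Complex.mul_conj]
      rw [Complex.normSq_eq_norm_sq]
    rw [Finset.sum_congr rfl fun q _ => this q]
    push_cast
    ring
  -- set up the column decomposition of y
  set yj : b → (a × b → ℂ) := fun j => e (fun q => y (q, j)) j with hyj
  have hy : y = ∑ j, yj j := by
    funext p
    simp only [hyj, he, Finset.sum_apply]
    rw [Finset.sum_ite_eq]
    simp
  set T : (a × b → ℂ) → EuclideanSpace ℂ (a × b) :=
    fun v => (WithLp.equiv 2 (a × b → ℂ)).symm v with hT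
  set w : b → ℝ := fun j => ‖T (B *ᵥ yj j)‖ with hw
  -- step 1: LHS as squared norm
  have step1 : star y ⬝ᵥ ((Bᴴ * B) *ᵥ y) = ((‖T (B *ᵥ y)‖ ^ 2 : ℝ) : ℂ) := by
    rw [hq, dot_sq]
  -- step 2: triangle inequality
  have hBy : T (B *ᵥ y) = ∑ j, T (B *ᵥ yj j) := by
    have h1 : B *ᵥ y = ∑ j, B *ᵥ yj j := by
      conv_lhs => rw [hy]
      rw [← mulVecLin_apply, map_sum]
      simp [mulVecLin_apply]
    rw [h1]
    exact map_sum (WithLp.linearEquiv 2 ℂ (a × b → ℂ)).symm _ _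
  have step2 : ‖T (B *ᵥ y)‖ ≤ ∑ j, w j := by
    rw [hBy]
    exact norm_sum_le _ _
  -- step 3: Cauchy-Schwarz
  have step3 : (∑ j, w j) ^ 2 ≤ (∑ j, (g j)⁻¹) * ∑ j, g j * w j ^ 2 := by
    refine Finset.sum_sq_le_sum_mul_sum_of_sq_eq_mul Finset.univ
      (fun j _ => inv_nonneg.2 (hg j).le)
      (fun j _ => mul_nonneg (hg j).le (sq_nonneg _)) (fun j _ => ?_)
    rw [inv_mul_cancel_left₀ (hg j).ne']
  -- step 4: per-column bound
  have step4 : ∀ j, w j ^ 2 ≤ ∑ q, ‖y (q, j)‖ ^ 2 := by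
    intro j
    have h1 : ((w j ^ 2 : ℝ) : ℂ) = star (yj j) ⬝ᵥ ((Bᴴ * B) *ᵥ yj j) := by
      rw [hq, dot_sq]
    have h2 : star (yj j) ⬝ᵥ ((Bᴴ * B) *ᵥ yj j) ≤ ((∑ q, ‖y (q, j)‖ ^ 2 : ℝ) : ℂ) := by
      rw [← total (fun q => y (q, j))]
      exact Finset.single_le_sum
        (f := fun j' => star (e (fun q => y (q, j)) j') ⬝ᵥ ((Bᴴ * B) *ᵥ e (fun q => y (q, j)) j'))
        (fun j' _ => (posSemidef_conjTranspose_mul_self B).dotProduct_mulVec_nonneg _) (Finset.mem_univ j)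
    rw [← h1] at h2
    exact_mod_cast h2
  -- assemble
  have real_ineq : ‖T (B *ᵥ y)‖ ^ 2
      ≤ (∑ j, (g j)⁻¹) * ∑ p : a × b, g p.2 * ‖y p‖ ^ 2 := by
    calc ‖T (B *ᵥ y)‖ ^ 2 ≤ (∑ j, w j) ^ 2 := by
          apply pow_le_pow_left₀ (norm_nonneg _) step2
      _ ≤ (∑ j, (g j)⁻¹) * ∑ j, g j * w j ^ 2 := step3
      _ ≤ (∑ j, (g j)⁻¹) * ∑ j, g j * ∑ q, ‖y (q, j)‖ ^ 2 := by
          refine mul_le_mul_of_nonneg_left ?_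
            (Finset.sum_nonneg fun j _ => inv_nonneg.2 (hg j).le)
          exact Finset.sum_le_sum fun j _ =>
            mul_le_mul_of_nonneg_left (step4 j) (hg j).le
      _ = (∑ j, (g j)⁻¹) * ∑ p : a × b, g p.2 * ‖y p‖ ^ 2 := by
          congr 1
          rw [Fintype.sum_prod_type_right]
          exact Finset.sum_congr rfl fun j _ => by rw [Finset.mul_sum]
  rw [step1]
  exact Complex.real_le_real.mpr real_ineq

private lemma kron_conjTranspose {a b : Type*} [Fintype a] [Fintype b]
    (A : Matrix a a ℂ) (B : Matrix b b ℂ) : (A ⊗ₖ B)ᴴ = Aᴴ ⊗ₖ Bᴴ := by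
  ext ⟨i, j⟩ ⟨k, l⟩
  simp [conjTranspose_apply, mul_comm]

private lemma conj_dot {n : Type*} [Fintype n] (A M : Matrix n n ℂ) (y : n → ℂ) :
    star (A *ᵥ y) ⬝ᵥ (M *ᵥ (A *ᵥ y)) = star y ⬝ᵥ ((Aᴴ * M * A) *ᵥ y) := by
  rw [star_mulVec, ← mulVec_mulVec, ← mulVec_mulVec, dotProduct_mulVec (star y)]

private lemma trace_helper {a b : Type*} [Fintype a] [DecidableEq a] [Fintype b] [DecidableEq b]
    (M : Matrix (a × b) (a × b) ℂ) (p q : a) :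
    ∑ i, M (p, i) (q, i) = ((Matrix.single q p (1:ℂ) ⊗ₖ (1 : Matrix b b ℂ)) * M).trace := by
  rw [Matrix.trace]
  simp only [Matrix.diag, mul_apply, Fintype.sum_prod_type, kroneckerMap_apply,
    Matrix.single, Matrix.of_apply, one_apply, ite_and, ite_mul, zero_mul, one_mul,
    mul_ite, mul_zero]
  rw [Finset.sum_comm]
  simp only [Finset.sum_ite_eq, Finset.sum_ite_eq', Finset.mem_univ, if_true]
  exact Finset.sum_congr rfl fun i _ => by simp

/-- Universal upper bound on the joint resource: for every CPTP map `Λ` and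
positive-definite density matrix `γ_B`, `J_Λ ≤ Tr(γ_B⁻¹) · (𝟙_A ⊗ γ_B)`. -/
theorem choi_le_trace_inv_smul
    {a b : Type*} [Fintype a] [DecidableEq a] [Fintype b] [DecidableEq b]
    (Λ : Matrix a a ℂ →ₗ[ℂ] Matrix b b ℂ) (hΛ : IsCPTP Λ)
    (γB : Matrix b b ℂ) (hB : γB.PosDef) (hBtr : γB.trace = 1) :
    ((γB⁻¹).trace • ((1 : Matrix a a ℂ) ⊗ₖ γB) - choiMat Λ).PosSemidef := by
  obtain ⟨hJ, hTP⟩ := hΛ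
  set J : Matrix (a × b) (a × b) ℂ := choiMat Λ with hJdef
  -- partial trace of the Choi matrix is the identity
  have htrJ : ∀ p q : a, (∑ i, J (p, i) (q, i)) = if p = q then (1:ℂ) else 0 := by
    intro p q
    have h1 : ∑ i, J (p, i) (q, i) = (Λ (Matrix.single p q 1)).trace := by
      simp [hJdef, choiMat, Matrix.trace, Matrix.diag]
    rw [h1, hTP]
    simp only [Matrix.trace, Matrix.diag, Matrix.single, Matrix.of_apply, ite_and]
    rw [Finset.sum_ite_eq]
    simp [eq_comm]
  -- spectral data of γB
  have hH : γB.IsHermitian := hB.1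
  set U : Matrix b b ℂ := (hH.eigenvectorUnitary : Matrix b b ℂ) with hUdef
  set g : b → ℝ := hH.eigenvalues with hgdef
  have hg : ∀ j, 0 < g j := hB.eigenvalues_pos
  set D : Matrix b b ℂ := diagonal (RCLike.ofReal ∘ g) with hDdef
  have hUU : U * star U = 1 := by
    simpa [hUdef] using (Matrix.mem_unitaryGroup_iff).mp (hH.eigenvectorUnitary).2
  have hUU' : star U * U = 1 := by
    simpa [hUdef] using (Matrix.mem_unitaryGroup_iff').mp (hH.eigenvectorUnitary).2
  have hspec : γB = U * D * star U := hH.spectral_theorem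
  -- inverse of γB and its trace
  set D' : Matrix b b ℂ := diagonal (fun j => ((g j)⁻¹ : ℂ)) with hD'def
  have hDD' : D * D' = 1 := by
    have hfun : (fun j => (RCLike.ofReal ∘ g) j * ((g j : ℝ) : ℂ)⁻¹) = fun _ => (1:ℂ) := by
      funext j
      rw [Function.comp_apply, show (RCLike.ofReal (g j) : ℂ) = ((g j : ℝ) : ℂ) from rfl,
        ← Complex.ofReal_inv, ← Complex.ofReal_mul, mul_inv_cancel₀ (hg j).ne',
        Complex.ofReal_one]
    rw [hDdef, hD'def, diagonal_mul_diagonal, hfun, diagonal_one]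
  have hγinv : γB * (U * D' * star U) = 1 := by
    rw [hspec]
    have h1 : U * D * star U * (U * D' * star U) = U * (D * ((star U * U) * (D' * star U))) := by
      simp only [Matrix.mul_assoc]
    rw [h1, hUU', Matrix.one_mul, ← Matrix.mul_assoc D D', hDD', Matrix.one_mul, hUU]
  have hinv : γB⁻¹ = U * D' * star U := inv_eq_right_inv hγinv
  have htrinv : (γB⁻¹).trace = ((∑ j, (g j)⁻¹ : ℝ) : ℂ) := by
    rw [hinv, trace_mul_cycle, hUU', Matrix.one_mul, hD'def, trace_diagonal]
    push_cast
    rfl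
  -- Kronecker unitaries
  set K : Matrix (a × b) (a × b) ℂ := (1 : Matrix a a ℂ) ⊗ₖ γB with hKdef
  set U' : Matrix (a × b) (a × b) ℂ := (1 : Matrix a a ℂ) ⊗ₖ U with hU'def
  have hU'star : star U' = (1 : Matrix a a ℂ) ⊗ₖ (star U) := by
    rw [hU'def, star_eq_conjTranspose, kron_conjTranspose, conjTranspose_one,
      ← star_eq_conjTranspose]
  have hU'U' : U' * star U' = 1 := by
    rw [hU'star, hU'def, ← mul_kronecker_mul, Matrix.mul_one, hUU, one_kronecker_one]
  have hU'sU' : star U' * U' = 1 := by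
    rw [hU'star, hU'def, ← mul_kronecker_mul, Matrix.mul_one, hUU', one_kronecker_one]
  -- the conjugated Choi matrix
  set J' : Matrix (a × b) (a × b) ℂ := U'ᴴ * J * U' with hJ'def
  have hJ'psd : J'.PosSemidef := hJ.conjTranspose_mul_mul_same U'
  have htrJ' : ∀ p q : a, (∑ i, J' (p, i) (q, i)) = if p = q then (1:ℂ) else 0 := by
    intro p q
    set X : Matrix (a × b) (a × b) ℂ := Matrix.single q p (1:ℂ) ⊗ₖ (1 : Matrix b b ℂ) with hXdef
    have hconj : U' * X * star U' = X := by
      simp only [hXdef, hU'def, hU'star, ← mul_kronecker_mul, Matrix.one_mul,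
        Matrix.mul_one, hUU]
      rw [← hU'def, hU'star, ← mul_kronecker_mul, Matrix.mul_one, hUU]
    calc ∑ i, J' (p, i) (q, i) = (X * J').trace := trace_helper J' p q
      _ = ((U' * X * star U') * J).trace := by
          rw [hJ'def]
          have h2 : X * (U'ᴴ * J * U') = (X * U'ᴴ * J) * U' := by
            simp only [Matrix.mul_assoc]
          rw [h2, trace_mul_comm]
          congr 1
          simp only [star_eq_conjTranspose, Matrix.mul_assoc]
      _ = (X * J).trace := by rw [hconj]
      _ = ∑ i, J (p, i) (q, i) := (trace_helper J p q).symm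
      _ = if p = q then (1:ℂ) else 0 := htrJ p q
  -- Hermitian part
  have hKH : Kᴴ = K := by
    rw [hKdef, kron_conjTranspose, conjTranspose_one, hH.eq]
  have hcstar : star ((γB⁻¹).trace) = (γB⁻¹).trace := by
    rw [htrinv, Complex.star_def, Complex.conj_ofReal]
  have hermit : (((γB⁻¹).trace • K - J)).IsHermitian := by
    have h1 : ((γB⁻¹).trace • K).IsHermitian := by
      show ((γB⁻¹).trace • K)ᴴ = _
      rw [conjTranspose_smul, hcstar, hKH]
    exact h1.sub hJ.1
  refine posSemidef_iff_dotProduct_mulVec.mpr ⟨hermit, fun x => ?_⟩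
  rw [sub_mulVec, dotProduct_sub, smul_mulVec, dotProduct_smul, sub_nonneg]
  set y : a × b → ℂ := star U' *ᵥ x with hydef
  have hx : x = U' *ᵥ y := by
    rw [hydef, mulVec_mulVec, hU'U', one_mulVec]
  have hJpart : star x ⬝ᵥ (J *ᵥ x) = star y ⬝ᵥ (J' *ᵥ y) := by
    conv_lhs => rw [hx]
    rw [conj_dot, hJ'def]
  have hKU : U'ᴴ * K * U' = (1 : Matrix a a ℂ) ⊗ₖ D := by
    have hUDU : star U * γB * U = D := by
      rw [hspec]
      have h2 : star U * (U * D * star U) * U = (star U * U) * (D * (star U * U)) := by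
        simp only [Matrix.mul_assoc]
      rw [h2, hUU', Matrix.one_mul, Matrix.mul_one]
    rw [← star_eq_conjTranspose, hU'star, hU'def, hKdef]
    simp only [← mul_kronecker_mul, Matrix.one_mul, Matrix.mul_one, hUDU]
  have hKpart : star x ⬝ᵥ (K *ᵥ x) = ((∑ p : a × b, g p.2 * ‖y p‖ ^ 2 : ℝ) : ℂ) := by
    conv_lhs => rw [hx]
    rw [conj_dot, hKU]
    have hdiag : (1 : Matrix a a ℂ) ⊗ₖ D = diagonal (fun p : a × b => ((g p.2 : ℝ) : ℂ)) := by
      rw [hDdef, ← diagonal_one, diagonal_kronecker_diagonal]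
      congr 1
      funext p
      simp [show (RCLike.ofReal (g p.2) : ℂ) = ((g p.2 : ℝ) : ℂ) from rfl]
    rw [hdiag]
    simp only [dotProduct, mulVec_diagonal, Pi.star_apply]
    trans (∑ p : a × b, ((g p.2 : ℝ) : ℂ) * ((‖y p‖ ^ 2 : ℝ) : ℂ))
    · refine Finset.sum_congr rfl fun p _ => ?_
      rw [Complex.star_def,
        show (starRingEnd ℂ) (y p) * (((g p.2 : ℝ) : ℂ) * y p)
          = ((g p.2 : ℝ) : ℂ) * (y p * (starRingEnd ℂ) (y p)) from by ring,
        Complex.mul_conj, Complex.normSq_eq_norm_sq]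
    · push_cast
      rfl
  rw [hJpart, hKpart, htrinv]
  calc star y ⬝ᵥ (J' *ᵥ y)
      ≤ (((∑ j, (g j)⁻¹) * ∑ p : a × b, g p.2 * ‖y p‖ ^ 2 : ℝ) : ℂ) :=
        key J' hJ'psd htrJ' g hg y
    _ = ((∑ j, (g j)⁻¹ : ℝ) : ℂ) • ((∑ p : a × b, g p.2 * ‖y p‖ ^ 2 : ℝ) : ℂ) := by
        rw [smul_eq_mul]
        push_cast
        ring
end

section
/- No local channel increases the athermality of the thermofield double: for all CPTP maps Λ from C^d to a system B with full-rank thermal state γ_B satisfying Tr(γ_B^{-1}) ≤ Tr(γ^{-1}), one has min{λ | (I ⊗ Λ)(γ̃) ≤ λ (γ ⊗ γ_B)} ≤ Tr(γ^{-1}) = min{λ | γ̃ ≤ λ (γ ⊗ γ)}, where γ̃ is the thermofield double of the positive-definite density matrix γ on C^d. -/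
open Matrix ComplexOrder Kronecker

/-- The thermofield double state `γ̃ = |γ̃⟩⟨γ̃|` with `|γ̃⟩ = Σ_i √g_i |i⟩⊗|i⟩`. -/
noncomputable def tfd {d : ℕ} (g : Fin d → ℝ) : Matrix (Fin d × Fin d) (Fin d × Fin d) ℂ :=
  Matrix.of fun p q => if p.1 = p.2 ∧ q.1 = q.2 then
    ((Real.sqrt (g p.1) * Real.sqrt (g q.1) : ℝ) : ℂ) else 0

/-- The result of applying `I ⊗ Λ` to the thermofield double of `γ = diag(g)`. -/
noncomputable def outTFD {d : ℕ} {m : Type*} [Fintype m] [DecidableEq m] (g : Fin d → ℝ)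
    (Λ : Matrix (Fin d) (Fin d) ℂ →ₗ[ℂ] Matrix m m ℂ) : Matrix (Fin d × m) (Fin d × m) ℂ :=
  Matrix.of fun p q =>
    ((Real.sqrt (g p.1) * Real.sqrt (g q.1) : ℝ) : ℂ)
      * Λ (Matrix.single p.1 q.1 1) p.2 q.2

/-- Cauchy–Schwarz for complex sums in `normSq` form. -/
lemma cs_normSq {ι : Type*} [Fintype ι] (f u : ι → ℂ) :
    Complex.normSq (∑ a, f a * u a) ≤ (∑ a, Complex.normSq (f a)) * (∑ a, Complex.normSq (u a)) := by
  have h1 : ‖∑ a, f a * u a‖ ≤ ∑ a, ‖f a‖ * ‖u a‖ := by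
    refine (norm_sum_le (E := ℂ) Finset.univ _).trans (le_of_eq ?_)
    simp [norm_mul]
  have h2 := Finset.sum_mul_sq_le_sq_mul_sq Finset.univ (fun a => ‖f a‖)
    (fun a => ‖u a‖)
  calc Complex.normSq (∑ a, f a * u a) = (‖∑ a, f a * u a‖)^2 :=
        (Complex.sq_norm _).symm
    _ ≤ (∑ a, ‖f a‖ * ‖u a‖)^2 := by
        apply pow_le_pow_left₀ (norm_nonneg _) h1
    _ ≤ (∑ a, ‖f a‖^2) * (∑ a, ‖u a‖^2) := h2
    _ = _ := by simp [Complex.sq_norm]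

/-- If `M Mᴴ ≤ c` (in quadratic-form sense) then `Mᴴ M ≤ c`. -/
lemma lemB {α β : Type*} [Fintype α] [Fintype β] (M : Matrix α β ℂ) (c : ℝ) (hc : 0 ≤ c)
    (h : ∀ u : α → ℂ, ∑ p, Complex.normSq ((Mᴴ *ᵥ u) p) ≤ c * ∑ a, Complex.normSq (u a)) :
    ∀ v : β → ℂ, ∑ a, Complex.normSq ((M *ᵥ v) a) ≤ c * ∑ p, Complex.normSq (v p) := by
  intro v
  set w := M *ᵥ v with hw
  set s := ∑ a, Complex.normSq (w a) with hs
  set t := ∑ p, Complex.normSq (v p) with ht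
  have hs0 : 0 ≤ s := Finset.sum_nonneg fun a _ => Complex.normSq_nonneg _
  have ht0 : 0 ≤ t := Finset.sum_nonneg fun p _ => Complex.normSq_nonneg _
  have key : (s : ℂ) = ∑ b, star ((Mᴴ *ᵥ w) b) * v b := by
    have e1 : (s : ℂ) = star w ⬝ᵥ w := by
      rw [hs]
      push_cast
      simp [dotProduct, Pi.star_apply, ← Complex.normSq_eq_conj_mul_self]
    have e3 : star (Mᴴ *ᵥ w) = star w ᵥ* M := by
      rw [Matrix.star_mulVec, conjTranspose_conjTranspose]
    have e2 : star w ⬝ᵥ w = star (Mᴴ *ᵥ w) ⬝ᵥ v := by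
      calc star w ⬝ᵥ w = star w ⬝ᵥ (M *ᵥ v) := by rw [← hw]
        _ = (star w ᵥ* M) ⬝ᵥ v := dotProduct_mulVec _ _ _
        _ = star (Mᴴ *ᵥ w) ⬝ᵥ v := by rw [e3]
    rw [e1, e2]; rfl
  have habs : s ^ 2 ≤ Complex.normSq (∑ b, star ((Mᴴ *ᵥ w) b) * v b) := by
    have hre : s = (∑ b, star ((Mᴴ *ᵥ w) b) * v b).re := by rw [← key]; simp
    rw [hre, ← Complex.sq_norm]
    have h2 := Complex.abs_re_le_norm (∑ b, star ((Mᴴ *ᵥ w) b) * v b)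
    rcases abs_le.mp h2 with ⟨hl, hr⟩
    exact sq_le_sq' hl hr
  have hcs : Complex.normSq (∑ b, star ((Mᴴ *ᵥ w) b) * v b)
      ≤ (∑ b, Complex.normSq ((Mᴴ *ᵥ w) b)) * t := by
    have := cs_normSq (fun b => star ((Mᴴ *ᵥ w) b)) v
    simpa [Complex.normSq_conj] using this
  have hfin : s ^ 2 ≤ (c * s) * t :=
    habs.trans (hcs.trans (mul_le_mul_of_nonneg_right (h w) ht0))
  rcases eq_or_lt_of_le hs0 with h0 | h0
  · rw [← h0]; positivity
  · have h1 : s * s ≤ (c * t) * s := by nlinarith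
    exact le_of_mul_le_mul_right h1 h0

lemma swap4 {α β γ δ : Type*} [Fintype α] [Fintype β] [Fintype γ] [Fintype δ]
    (f : α → β → γ → δ → ℂ) :
    (∑ p, ∑ a, ∑ i, ∑ k, f p a i k) = ∑ i, ∑ k, ∑ p, ∑ a, f p a i k := by
  calc (∑ p, ∑ a, ∑ i, ∑ k, f p a i k)
      = ∑ p, ∑ i, ∑ a, ∑ k, f p a i k :=
        Finset.sum_congr rfl fun p _ => Finset.sum_comm
    _ = ∑ i, ∑ p, ∑ a, ∑ k, f p a i k := Finset.sum_comm
    _ = ∑ i, ∑ p, ∑ k, ∑ a, f p a i k :=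
        Finset.sum_congr rfl fun i _ => Finset.sum_congr rfl fun p _ => Finset.sum_comm
    _ = ∑ i, ∑ k, ∑ p, ∑ a, f p a i k :=
        Finset.sum_congr rfl fun i _ => Finset.sum_comm

open scoped MatrixOrder in
lemma coreA {n m : Type*} [Fintype n] [DecidableEq n] [Fintype m] [DecidableEq m]
    (C : Matrix (n × m) (n × m) ℂ) (hC : C.PosSemidef)
    (hTP : ∀ i k : n, ∑ p, C (i, p) (k, p) = if i = k then (1:ℂ) else 0)
    (γB : Matrix m m ℂ) (hB : γB.PosDef) (z : n × m → ℂ) :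
    (star z ⬝ᵥ C *ᵥ z).re ≤ (γB⁻¹.trace).re *
      ∑ i, (star (fun p => z (i, p)) ⬝ᵥ γB *ᵥ (fun p => z (i, p))).re := by
  classical
  obtain ⟨T, hT⟩ : ∃ T : Matrix (n × m) (n × m) ℂ, C = Tᴴ * T := by
    obtain ⟨T, hT⟩ := CStarAlgebra.nonneg_iff_eq_star_mul_self.mp hC.nonneg
    exact ⟨T, hT⟩
  set R := CFC.sqrt γB with hRdef
  have hRps : R.PosSemidef := (CFC.sqrt_nonneg γB).posSemidef
  have hRH : R.IsHermitian := hRps.1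
  have hRR : R * R = γB := CFC.sqrt_mul_sqrt_self γB hB.posSemidef.nonneg
  have hdet : IsUnit R.det := by
    have h1 : R.det * R.det = γB.det := by rw [← det_mul, hRR]
    have h2 : γB.det ≠ 0 := hB.det_pos.ne'
    rw [← h1] at h2
    exact (IsUnit.mk0 _ (fun h0 => h2 (by rw [h0, zero_mul])))
  set S := R⁻¹ with hSdef
  have hSR : S * R = 1 := nonsing_inv_mul R hdet
  have hSH : S.IsHermitian := hRH.inv
  have hSsymm : ∀ p q, star (S p q) = S q p := by
    intro p q
    rw [← Matrix.conjTranspose_apply, hSH]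
  have hInv : γB⁻¹ = S * S := by rw [← hRR, Matrix.mul_inv_rev]
  -- the trace of γB⁻¹ as a sum of squares
  have htr : (γB⁻¹.trace).re = ∑ q, ∑ p, Complex.normSq (S q p) := by
    rw [hInv, Matrix.trace]
    rw [Complex.re_sum]
    refine Finset.sum_congr rfl fun q _ => ?_
    rw [Matrix.diag_apply, Matrix.mul_apply, Complex.re_sum]
    refine Finset.sum_congr rfl fun p _ => ?_
    rw [← hSsymm q p]
    simp [Complex.star_def, Complex.mul_conj]
  have ht0 : 0 ≤ (γB⁻¹.trace).re := by
    rw [htr]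
    exact Finset.sum_nonneg fun q _ => Finset.sum_nonneg fun p _ => Complex.normSq_nonneg _
  -- change of variables
  set yv : n → m → ℂ := fun i => R *ᵥ (fun r => z (i, r)) with hyvdef
  have hz : ∀ i : n, (fun p => z (i, p)) = S *ᵥ yv i := by
    intro i
    rw [hyvdef, Matrix.mulVec_mulVec, hSR, Matrix.one_mulVec]
  set y : n × m → ℂ := fun ip => yv ip.1 ip.2 with hydef
  -- RHS identity
  have hRHS : ∀ i, (star (fun p => z (i, p)) ⬝ᵥ γB *ᵥ (fun p => z (i, p))).re
      = ∑ p, Complex.normSq (yv i p) := by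
    intro i
    have e : star (fun p => z (i, p)) ⬝ᵥ γB *ᵥ (fun p => z (i, p))
        = star (yv i) ⬝ᵥ yv i := by
      rw [← hRR]
      calc star (fun p => z (i, p)) ⬝ᵥ (R * R) *ᵥ (fun p => z (i, p))
          = star (fun p => z (i, p)) ⬝ᵥ (R *ᵥ (R *ᵥ (fun p => z (i, p)))) := by
            rw [Matrix.mulVec_mulVec]
        _ = (star (fun p => z (i, p)) ᵥ* R) ⬝ᵥ (R *ᵥ (fun p => z (i, p))) :=
            dotProduct_mulVec _ _ _
        _ = star (R *ᵥ (fun p => z (i, p))) ⬝ᵥ (R *ᵥ (fun p => z (i, p))) := by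
            rw [Matrix.star_mulVec, hRH.eq]
        _ = star (yv i) ⬝ᵥ yv i := rfl
    rw [e]
    simp only [dotProduct, Pi.star_apply, Complex.star_def,
      ← Complex.normSq_eq_conj_mul_self, Complex.re_sum]
    simp
  -- LHS identity
  have hLHS : (star z ⬝ᵥ C *ᵥ z).re = ∑ a, Complex.normSq ((T *ᵥ z) a) := by
    have e : star z ⬝ᵥ C *ᵥ z = star (T *ᵥ z) ⬝ᵥ (T *ᵥ z) := by
      rw [hT]
      calc star z ⬝ᵥ (Tᴴ * T) *ᵥ z = star z ⬝ᵥ (Tᴴ *ᵥ (T *ᵥ z)) := by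
            rw [Matrix.mulVec_mulVec]
        _ = (star z ᵥ* Tᴴ) ⬝ᵥ (T *ᵥ z) := dotProduct_mulVec _ _ _
        _ = star (T *ᵥ z) ⬝ᵥ (T *ᵥ z) := by rw [← Matrix.star_mulVec]
    rw [e]
    simp only [dotProduct, Pi.star_apply, Complex.star_def,
      ← Complex.normSq_eq_conj_mul_self, Complex.re_sum]
    simp
  -- the matrix W
  set W : Matrix (n × m) (n × m) ℂ :=
    Matrix.of (fun a b => ∑ p, T a (b.1, p) * S p b.2) with hWdef
  have factW : T *ᵥ z = W *ᵥ y := by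
    funext a
    simp only [Matrix.mulVec, dotProduct]
    calc ∑ ip : n × m, T a ip * z ip
        = ∑ i, ∑ p, T a (i, p) * z (i, p) := by rw [Fintype.sum_prod_type]
      _ = ∑ i, ∑ p, T a (i, p) * ∑ q, S p q * yv i q := by
          refine Finset.sum_congr rfl fun i _ => Finset.sum_congr rfl fun p _ => ?_
          rw [congrFun (hz i) p]
          rfl
      _ = ∑ i, ∑ q, (∑ p, T a (i, p) * S p q) * yv i q := by
          refine Finset.sum_congr rfl fun i _ => ?_
          simp only [Finset.mul_sum, Finset.sum_mul]
          rw [Finset.sum_comm]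
          exact Finset.sum_congr rfl fun p _ => Finset.sum_congr rfl fun q _ => by ring
      _ = ∑ b : n × m, W a b * y b := by
          rw [Fintype.sum_prod_type]
          rfl
  -- the key bound via lemB
  have hW : ∀ u : n × m → ℂ,
      ∑ b, Complex.normSq ((Wᴴ *ᵥ u) b) ≤ (γB⁻¹.trace).re * ∑ a, Complex.normSq (u a) := by
    intro u
    set c := ∑ a, Complex.normSq (u a) with hcdef
    have hc0 : 0 ≤ c := Finset.sum_nonneg fun _ _ => Complex.normSq_nonneg _
    set K : Matrix n m ℂ := Matrix.of (fun i p => ∑ a, star (T a (i, p)) * u a) with hKdef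
    have step1 : ∀ iq : n × m, (Wᴴ *ᵥ u) iq = ∑ p, S iq.2 p * K iq.1 p := by
      rintro ⟨i, q⟩
      simp only [Matrix.mulVec, dotProduct, Matrix.conjTranspose_apply, hWdef,
        Matrix.of_apply, star_sum, star_mul']
      calc ∑ a, (∑ p, star (T a (i, p)) * star (S p q)) * u a
          = ∑ a, ∑ p, star (S p q) * (star (T a (i, p)) * u a) := by
            refine Finset.sum_congr rfl fun a _ => ?_
            rw [Finset.sum_mul]
            exact Finset.sum_congr rfl fun p _ => by ring
        _ = ∑ p, star (S p q) * ∑ a, star (T a (i, p)) * u a := by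
            rw [Finset.sum_comm]
            exact Finset.sum_congr rfl fun p _ => by rw [Finset.mul_sum]
        _ = ∑ p, S q p * K i p := by
            refine Finset.sum_congr rfl fun p _ => ?_
            rw [hSsymm p q]
            rfl
    -- the TP condition in terms of T
    have hTPT : ∀ i k : n, ∑ p, ∑ a, T a (i, p) * star (T a (k, p))
        = if i = k then (1:ℂ) else 0 := by
      intro i k
      have h1 : ∑ p, ∑ a, star (T a (i, p)) * T a (k, p) = if i = k then (1:ℂ) else 0 := by
        rw [← hTP i k]
        refine Finset.sum_congr rfl fun p _ => ?_
        rw [hT, Matrix.mul_apply]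
        exact Finset.sum_congr rfl fun a _ => by rw [Matrix.conjTranspose_apply]
      calc ∑ p, ∑ a, T a (i, p) * star (T a (k, p))
          = star (∑ p, ∑ a, star (T a (i, p)) * T a (k, p)) := by
            rw [star_sum]
            refine Finset.sum_congr rfl fun p _ => ?_
            rw [star_sum]
            refine Finset.sum_congr rfl fun a _ => ?_
            rw [star_mul', star_star]
        _ = if i = k then (1:ℂ) else 0 := by
            rw [h1]
            split <;> simp
    -- claim 1 : quadratic form of K Kᴴ is bounded by c
    have claim1 : ∀ w : n → ℂ, ∑ p, Complex.normSq ((Kᴴ *ᵥ w) p) ≤ c * ∑ i, Complex.normSq (w i) := by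
      intro w
      set F : (n × m) → m → ℂ := fun a p => ∑ i, T a (i, p) * w i with hFdef
      have e : ∀ p, (Kᴴ *ᵥ w) p = ∑ a, star (u a) * F a p := by
        intro p
        simp only [Matrix.mulVec, dotProduct, Matrix.conjTranspose_apply, hKdef,
          Matrix.of_apply, star_sum, star_mul', star_star]
        calc ∑ i, (∑ a, T a (i, p) * star (u a)) * w i
            = ∑ i, ∑ a, star (u a) * (T a (i, p) * w i) := by
              refine Finset.sum_congr rfl fun i _ => ?_
              rw [Finset.sum_mul]
              exact Finset.sum_congr rfl fun a _ => by ring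
          _ = ∑ a, star (u a) * ∑ i, T a (i, p) * w i := by
              rw [Finset.sum_comm]
              exact Finset.sum_congr rfl fun a _ => by rw [Finset.mul_sum]
      have claimF : ∑ p, ∑ a, Complex.normSq (F a p) = ∑ i, Complex.normSq (w i) := by
        have hcplx : (↑(∑ p, ∑ a : n × m, Complex.normSq (F a p)) : ℂ)
            = ↑(∑ i, Complex.normSq (w i)) := by
          push_cast
          calc ∑ p, ∑ a : n × m, (Complex.normSq (F a p) : ℂ)
              = ∑ p, ∑ a : n × m, F a p * star (F a p) := by
                refine Finset.sum_congr rfl fun p _ => Finset.sum_congr rfl fun a _ => ?_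
                rw [Complex.star_def, Complex.mul_conj]
            _ = ∑ p, ∑ a : n × m, ∑ i, ∑ k, (T a (i, p) * star (T a (k, p))) * (w i * star (w k)) := by
                refine Finset.sum_congr rfl fun p _ => Finset.sum_congr rfl fun a _ => ?_
                rw [hFdef]
                simp only [star_sum, star_mul']
                rw [Finset.sum_mul_sum]
                refine Finset.sum_congr rfl fun i _ => Finset.sum_congr rfl fun k _ => by ring
            _ = ∑ i, ∑ k, (∑ p, ∑ a : n × m, T a (i, p) * star (T a (k, p))) * (w i * star (w k)) := by
                rw [swap4 (fun p a i k => (T a (i, p) * star (T a (k, p))) * (w i * star (w k)))]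
                refine Finset.sum_congr rfl fun i _ => Finset.sum_congr rfl fun k _ => ?_
                simp only [Finset.sum_mul]
            _ = ∑ i, w i * star (w i) := by
                refine Finset.sum_congr rfl fun i _ => ?_
                rw [Finset.sum_eq_single_of_mem i (Finset.mem_univ i)
                  (fun k _ hk => by rw [hTPT i k, if_neg (fun h => hk h.symm), zero_mul])]
                rw [hTPT i i, if_pos rfl, one_mul]
            _ = ∑ i, (Complex.normSq (w i) : ℂ) := by
                refine Finset.sum_congr rfl fun i _ => ?_
                rw [Complex.star_def, Complex.mul_conj]
        exact_mod_cast hcplx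
      calc ∑ p, Complex.normSq ((Kᴴ *ᵥ w) p)
          = ∑ p, Complex.normSq (∑ a, star (u a) * F a p) := by
            exact Finset.sum_congr rfl fun p _ => by rw [e p]
        _ ≤ ∑ p, (∑ a, Complex.normSq (star (u a))) * (∑ a, Complex.normSq (F a p)) := by
            exact Finset.sum_le_sum fun p _ => cs_normSq _ _
        _ = c * ∑ p, ∑ a, Complex.normSq (F a p) := by
            rw [← Finset.mul_sum]
            congr 1
            · rw [hcdef]
              exact Finset.sum_congr rfl fun a _ => Complex.normSq_conj _
        _ = c * ∑ i, Complex.normSq (w i) := by rw [claimF]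
    have claim2 := lemB K c hc0 claim1
    -- final assembly
    calc ∑ b : n × m, Complex.normSq ((Wᴴ *ᵥ u) b)
        = ∑ i, ∑ q, Complex.normSq (∑ p, S q p * K i p) := by
          rw [Fintype.sum_prod_type]
          exact Finset.sum_congr rfl fun i _ => Finset.sum_congr rfl fun q _ => by
            rw [step1 (i, q)]
      _ = ∑ q, ∑ i, Complex.normSq ((K *ᵥ fun p => S q p) i) := by
          rw [Finset.sum_comm]
          refine Finset.sum_congr rfl fun q _ => Finset.sum_congr rfl fun i _ => ?_
          congr 1
          simp only [Matrix.mulVec, dotProduct]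
          exact Finset.sum_congr rfl fun p _ => by ring
      _ ≤ ∑ q, c * ∑ p, Complex.normSq (S q p) := by
          exact Finset.sum_le_sum fun q _ => claim2 _
      _ = (γB⁻¹.trace).re * c := by
          rw [htr, ← Finset.mul_sum, mul_comm]
      _ = (γB⁻¹.trace).re * ∑ a, Complex.normSq (u a) := by rw [hcdef]
  -- put everything together
  have main := lemB W (γB⁻¹.trace).re ht0 hW y
  rw [hLHS, factW]
  calc ∑ a, Complex.normSq ((W *ᵥ y) a)
      ≤ (γB⁻¹.trace).re * ∑ b : n × m, Complex.normSq (y b) := main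
    _ = (γB⁻¹.trace).re * ∑ i, (star (fun p => z (i, p)) ⬝ᵥ γB *ᵥ (fun p => z (i, p))).re := by
        congr 1
        rw [Fintype.sum_prod_type]
        exact Finset.sum_congr rfl fun i _ => (hRHS i).symm

lemma herm_im {ι : Type*} [Fintype ι] {M : Matrix ι ι ℂ} (hM : M.IsHermitian) (x : ι → ℂ) :
    (star x ⬝ᵥ M *ᵥ x).im = 0 := by
  have h : star (star x ⬝ᵥ M *ᵥ x) = star x ⬝ᵥ M *ᵥ x := by
    calc star (star x ⬝ᵥ M *ᵥ x) = star (M *ᵥ x) ⬝ᵥ x := by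
          simp only [dotProduct, star_sum, star_mul', star_star, Pi.star_apply]
          exact Finset.sum_congr rfl fun i _ => by ring
      _ = (star x ᵥ* Mᴴ) ⬝ᵥ x := by rw [Matrix.star_mulVec]
      _ = star x ⬝ᵥ (Mᴴ *ᵥ x) := by rw [dotProduct_mulVec]
      _ = star x ⬝ᵥ M *ᵥ x := by rw [hM.eq]
  have h2 := congrArg Complex.im h
  simp only [Complex.star_def, Complex.conj_im] at h2
  linarith

lemma qf_basis {ι : Type*} [Fintype ι] [DecidableEq ι] (M : Matrix ι ι ℂ) (a : ι) :
    star (fun b => if b = a then (1:ℂ) else 0) ⬝ᵥ M *ᵥ (fun b => if b = a then (1:ℂ) else 0)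
      = M a a := by
  simp [dotProduct, Matrix.mulVec, apply_ite, Finset.sum_ite_eq', Finset.mem_univ]

lemma qf_outTFD {d : ℕ} {m : Type*} [Fintype m] [DecidableEq m] (g : Fin d → ℝ)
    (Λ : Matrix (Fin d) (Fin d) ℂ →ₗ[ℂ] Matrix m m ℂ) (x : Fin d × m → ℂ) :
    star x ⬝ᵥ (outTFD g Λ) *ᵥ x
      = star (fun ip : Fin d × m => (Real.sqrt (g ip.1) : ℂ) * x ip) ⬝ᵥ
        (choiMat Λ) *ᵥ (fun ip : Fin d × m => (Real.sqrt (g ip.1) : ℂ) * x ip) := by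
  simp only [dotProduct, Matrix.mulVec, outTFD, choiMat, Matrix.of_apply, Pi.star_apply]
  refine Finset.sum_congr rfl fun p _ => ?_
  simp only [Finset.mul_sum]
  refine Finset.sum_congr rfl fun q _ => ?_
  simp only [star_mul', Complex.star_def, Complex.conj_ofReal, Complex.ofReal_mul]
  ring

lemma qf_kron {d : ℕ} {m : Type*} [Fintype m] [DecidableEq m] (g : Fin d → ℝ)
    (hg : ∀ i, 0 ≤ g i) (γB : Matrix m m ℂ) (x : Fin d × m → ℂ) :
    star x ⬝ᵥ ((Matrix.diagonal fun i => (g i : ℂ)) ⊗ₖ γB) *ᵥ x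
      = ∑ i, star (fun p => (Real.sqrt (g i) : ℂ) * x (i, p)) ⬝ᵥ
          γB *ᵥ (fun p => (Real.sqrt (g i) : ℂ) * x (i, p)) := by
  simp only [dotProduct, Matrix.mulVec, Matrix.kroneckerMap_apply,
    Matrix.diagonal_apply, Pi.star_apply]
  rw [Fintype.sum_prod_type]
  refine Finset.sum_congr rfl fun i _ => ?_
  refine Finset.sum_congr rfl fun p _ => ?_
  have hsq : ((Real.sqrt (g i) : ℂ)) * ((Real.sqrt (g i) : ℂ)) = ((g i : ℝ) : ℂ) := by
    rw [← Complex.ofReal_mul, Real.mul_self_sqrt (hg i)]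
  rw [Fintype.sum_prod_type]
  rw [Finset.sum_eq_single_of_mem i (Finset.mem_univ i)
    (fun k _ hk => by simp [if_neg (fun h : i = k => hk h.symm)])]
  simp only [if_pos rfl, Finset.mul_sum, star_mul', Complex.star_def, Complex.conj_ofReal]
  refine Finset.sum_congr rfl fun q _ => ?_
  rw [← hsq]
  ring_nf
  simp

lemma diag_real_star {ι : Type*} [DecidableEq ι] (f : ι → ℝ) (a b : ι) :
    star ((Matrix.diagonal fun i => (f i : ℂ)) a b)
      = (Matrix.diagonal fun i => (f i : ℂ)) b a := by
  rcases eq_or_ne a b with h | h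
  · subst h; simp [Matrix.diagonal_apply_eq, Complex.star_def, Complex.conj_ofReal]
  · rw [Matrix.diagonal_apply_ne _ h, Matrix.diagonal_apply_ne _ (Ne.symm h), star_zero]

lemma herm_kron {d : ℕ} {m : Type*} [Fintype m] [DecidableEq m] (g : Fin d → ℝ)
    (γB : Matrix m m ℂ) (hB : γB.IsHermitian) :
    ((Matrix.diagonal fun i => (g i : ℂ)) ⊗ₖ γB).IsHermitian := by
  show _ᴴ = _
  ext p q
  rw [Matrix.conjTranspose_apply, Matrix.kroneckerMap_apply, Matrix.kroneckerMap_apply,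
    star_mul', diag_real_star]
  congr 1
  rw [← Matrix.conjTranspose_apply, hB.eq]

lemma herm_outTFD {d : ℕ} {m : Type*} [Fintype m] [DecidableEq m] (g : Fin d → ℝ)
    (Λ : Matrix (Fin d) (Fin d) ℂ →ₗ[ℂ] Matrix m m ℂ) (h : (choiMat Λ).IsHermitian) :
    (outTFD g Λ).IsHermitian := by
  show _ᴴ = _
  ext p q
  rw [Matrix.conjTranspose_apply]
  show star (outTFD g Λ q p) = outTFD g Λ p q
  have hc : star (choiMat Λ q p) = choiMat Λ p q := by
    rw [← Matrix.conjTranspose_apply, h.eq]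
  simp only [outTFD, Matrix.of_apply, star_mul', Complex.star_def, Complex.conj_ofReal]
  have : (Λ (Matrix.single q.1 p.1 1) q.2 p.2) = choiMat Λ q p := rfl
  rw [this]
  rw [show (Λ (Matrix.single p.1 q.1 1) p.2 q.2) = choiMat Λ p q from rfl]
  rw [← hc, Complex.star_def]
  push_cast
  ring
lemma herm_tfd {d : ℕ} (g : Fin d → ℝ) : (tfd g).IsHermitian := by
  show _ᴴ = _
  ext p q
  rw [Matrix.conjTranspose_apply]
  show star (tfd g q p) = tfd g p q
  simp only [tfd, Matrix.of_apply]
  rcases Decidable.em (q.1 = q.2 ∧ p.1 = p.2) with h | h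
  · rw [if_pos h, if_pos ⟨h.2, h.1⟩, Complex.star_def, Complex.conj_ofReal]
    push_cast; ring
  · rw [if_neg h, if_neg (fun hh => h ⟨hh.2, hh.1⟩), star_zero]

lemma herm_comb_s13 {ι : Type*} [Fintype ι] {A B : Matrix ι ι ℂ} (l : ℝ)
    (hA : A.IsHermitian) (hB : B.IsHermitian) : (((l : ℂ) • A) - B).IsHermitian := by
  show _ᴴ = _
  rw [Matrix.conjTranspose_sub, Matrix.conjTranspose_smul, hA.eq, hB.eq]
  congr 1
  simp [Complex.star_def, Complex.conj_ofReal]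

lemma qf_decomp {ι : Type*} [Fintype ι] (A B : Matrix ι ι ℂ) (l : ℝ) (x : ι → ℂ) :
    star x ⬝ᵥ (((l : ℂ) • A - B) *ᵥ x)
      = (l : ℂ) * (star x ⬝ᵥ A *ᵥ x) - star x ⬝ᵥ B *ᵥ x := by
  rw [Matrix.sub_mulVec, Matrix.smul_mulVec, dotProduct_sub, dotProduct_smul, smul_eq_mul]

lemma qf_diag2 {d : ℕ} (g : Fin d → ℝ) (x : Fin d × Fin d → ℂ) :
    star x ⬝ᵥ ((Matrix.diagonal fun i => (g i : ℂ)) ⊗ₖ (Matrix.diagonal fun i => (g i : ℂ))) *ᵥ x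
      = ∑ p : Fin d × Fin d, ((g p.1 * g p.2 : ℝ) : ℂ) * (Complex.normSq (x p) : ℂ) := by
  rw [Matrix.diagonal_kronecker_diagonal]
  simp only [dotProduct, Pi.star_apply, Matrix.mulVec_diagonal]
  refine Finset.sum_congr rfl fun p _ => ?_
  calc star (x p) * ((g p.1 : ℂ) * (g p.2 : ℂ) * x p)
      = ((g p.1 : ℂ) * (g p.2 : ℂ)) * ((starRingEnd ℂ) (x p) * x p) := by
        rw [Complex.star_def]; ring
    _ = ((g p.1 * g p.2 : ℝ) : ℂ) * (Complex.normSq (x p) : ℂ) := by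
        rw [← Complex.normSq_eq_conj_mul_self]; push_cast; ring

lemma qf_tfd {d : ℕ} (g : Fin d → ℝ) (x : Fin d × Fin d → ℂ) :
    star x ⬝ᵥ (tfd g) *ᵥ x
      = (Complex.normSq (∑ i, (Real.sqrt (g i) : ℂ) * x (i, i)) : ℂ) := by
  have hrhs : (Complex.normSq (∑ i, (Real.sqrt (g i) : ℂ) * x (i, i)) : ℂ)
      = (∑ i, star ((Real.sqrt (g i) : ℂ) * x (i, i))) * (∑ k, (Real.sqrt (g k) : ℂ) * x (k, k)) := by
    rw [← star_sum, Complex.star_def, ← Complex.normSq_eq_conj_mul_self]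
  rw [hrhs, Finset.sum_mul_sum]
  simp only [dotProduct, Pi.star_apply, Matrix.mulVec, tfd, Matrix.of_apply]
  rw [Fintype.sum_prod_type]
  refine Finset.sum_congr rfl fun i _ => ?_
  -- goal : ∑ p2, star (x (i,p2)) * (∑ q, ite ... * x q) = ∑ k, star(√g i * x (i,i)) * (√g k * x (k,k))
  rw [Finset.sum_eq_single_of_mem i (Finset.mem_univ i) ?offdiag]
  · rw [Finset.mul_sum]
    rw [Fintype.sum_prod_type]
    refine Finset.sum_congr rfl fun k _ => ?_
    rw [Finset.sum_eq_single_of_mem k (Finset.mem_univ k) ?offdiag2]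
    · rw [if_pos (show (i,(i:Fin d)).1 = (i,i).2 ∧ ((k : Fin d),(k:Fin d)).1 = (k,k).2 from ⟨rfl, rfl⟩)]
      simp only [star_mul', Complex.star_def, Complex.conj_ofReal]
      push_cast
      ring
    · intro q _ hq
      rw [if_neg (fun h : i = i ∧ k = q => hq (h.2.symm))]
      ring
  · intro p2 _ hp2
    have : ∀ q : Fin d × Fin d, (if i = p2 ∧ q.1 = q.2 then
        ((Real.sqrt (g i) * Real.sqrt (g q.1) : ℝ) : ℂ) else 0) * x q = 0 := by
      intro q
      rw [if_neg (fun h => hp2 h.1.symm), zero_mul]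
    simp only [this, Finset.sum_const_zero, mul_zero]


lemma key_cs {d : ℕ} (g : Fin d → ℝ) (hg : ∀ i, 0 < g i) (x : Fin d × Fin d → ℂ) :
    Complex.normSq (∑ i, (Real.sqrt (g i) : ℂ) * x (i, i))
      ≤ (∑ i, (g i)⁻¹) * ∑ p : Fin d × Fin d, g p.1 * g p.2 * Complex.normSq (x p) := by
  have hsq : ∀ i, Real.sqrt (g i) * Real.sqrt (g i) = g i :=
    fun i => Real.mul_self_sqrt (hg i).le
  have h1 : ‖∑ i, (Real.sqrt (g i) : ℂ) * x (i, i)‖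
      ≤ ∑ i, Real.sqrt (g i) * ‖x (i, i)‖ := by
    refine (norm_sum_le (E := ℂ) Finset.univ _).trans (le_of_eq ?_)
    refine Finset.sum_congr rfl fun i _ => ?_
    rw [norm_mul, Complex.norm_real,
      Real.norm_of_nonneg (Real.sqrt_nonneg _)]
  have h2 : (∑ i, Real.sqrt (g i) * ‖x (i, i)‖)^2
      ≤ (∑ i, (g i)⁻¹) * (∑ i, (g i * ‖x (i, i)‖)^2) := by
    have := Finset.sum_mul_sq_le_sq_mul_sq Finset.univ
      (fun i => (Real.sqrt (g i))⁻¹) (fun i => g i * ‖x (i, i)‖)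
    have e1 : ∀ i : Fin d, (Real.sqrt (g i))⁻¹ * (g i * ‖x (i, i)‖)
        = Real.sqrt (g i) * ‖x (i, i)‖ := by
      intro i
      have hs : Real.sqrt (g i) ≠ 0 := ne_of_gt (Real.sqrt_pos.mpr (hg i))
      field_simp
      linear_combination (-‖x (i, i)‖) * hsq i
    have e2 : ∀ i : Fin d, ((Real.sqrt (g i))⁻¹)^2 = (g i)⁻¹ := by
      intro i
      rw [← one_div, div_pow, one_pow, sq, hsq i, one_div]
    calc (∑ i, Real.sqrt (g i) * ‖x (i, i)‖)^2
        = (∑ i, (Real.sqrt (g i))⁻¹ * (g i * ‖x (i, i)‖))^2 := by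
          rw [Finset.sum_congr rfl fun i _ => (e1 i).symm]
      _ ≤ (∑ i, ((Real.sqrt (g i))⁻¹)^2) * (∑ i, (g i * ‖x (i, i)‖)^2) := this
      _ = (∑ i, (g i)⁻¹) * (∑ i, (g i * ‖x (i, i)‖)^2) := by
          rw [Finset.sum_congr rfl fun i _ => e2 i]
  have h3 : (∑ i, (g i * ‖x (i, i)‖)^2)
      ≤ ∑ p : Fin d × Fin d, g p.1 * g p.2 * Complex.normSq (x p) := by
    have e3 : ∀ i : Fin d, (g i * ‖x (i, i)‖)^2
        = g ((i, i) : Fin d × Fin d).1 * g ((i, i) : Fin d × Fin d).2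
          * Complex.normSq (x (i, i)) := by
      intro i
      rw [mul_pow, Complex.sq_norm]
      ring
    rw [Finset.sum_congr rfl fun i _ => e3 i]
    have himg : ∑ p ∈ Finset.univ.image (fun i : Fin d => ((i, i) : Fin d × Fin d)),
        g p.1 * g p.2 * Complex.normSq (x p)
        = ∑ i : Fin d, g ((i, i) : Fin d × Fin d).1 * g ((i, i) : Fin d × Fin d).2
            * Complex.normSq (x (i, i)) := by
      refine Finset.sum_image ?_
      intro i _ j _ h
      exact (Prod.ext_iff.mp h).1
    rw [← himg]
    refine Finset.sum_le_sum_of_subset_of_nonneg (Finset.subset_univ _) fun p _ _ => ?_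
    exact mul_nonneg (mul_nonneg (hg p.1).le (hg p.2).le) (Complex.normSq_nonneg _)
  have habs : Complex.normSq (∑ i, (Real.sqrt (g i) : ℂ) * x (i, i))
      = (‖∑ i, (Real.sqrt (g i) : ℂ) * x (i, i)‖)^2 := (Complex.sq_norm _).symm
  have h0 : (0:ℝ) ≤ ∑ i, Real.sqrt (g i) * ‖x (i, i)‖ :=
    Finset.sum_nonneg fun i _ => mul_nonneg (Real.sqrt_nonneg _) (norm_nonneg _)
  have hl0 : (0:ℝ) ≤ ∑ i, (g i)⁻¹ :=
    Finset.sum_nonneg fun i _ => (inv_pos.mpr (hg i)).le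
  calc Complex.normSq (∑ i, (Real.sqrt (g i) : ℂ) * x (i, i))
      ≤ (∑ i, Real.sqrt (g i) * ‖x (i, i)‖)^2 := by
        rw [habs]; exact pow_le_pow_left₀ (norm_nonneg _) h1 2
    _ ≤ (∑ i, (g i)⁻¹) * (∑ i, (g i * ‖x (i, i)‖)^2) := h2
    _ ≤ (∑ i, (g i)⁻¹) * ∑ p : Fin d × Fin d, g p.1 * g p.2 * Complex.normSq (x p) :=
        mul_le_mul_of_nonneg_left h3 hl0

lemma part2_mem {d : ℕ} (g : Fin d → ℝ) (hg : ∀ i, 0 < g i) :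
    ((((∑ i, (g i)⁻¹ : ℝ)) : ℂ) • ((Matrix.diagonal fun i => (g i : ℂ))
      ⊗ₖ (Matrix.diagonal fun i => (g i : ℂ))) - tfd g).PosSemidef := by
  have hγH : (Matrix.diagonal fun i : Fin d => (g i : ℂ)).IsHermitian :=
    Matrix.isHermitian_diagonal_of_self_adjoint _
      (funext fun i => Complex.conj_ofReal _)
  have hherm := herm_comb_s13 (∑ i, (g i)⁻¹) (herm_kron g _ hγH) (herm_tfd g)
  refine .of_dotProduct_mulVec_nonneg hherm fun x => ?_
  have him := herm_im hherm x
  have e := qf_decomp ((Matrix.diagonal fun i : Fin d => (g i : ℂ))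
    ⊗ₖ (Matrix.diagonal fun i => (g i : ℂ))) (tfd g) (∑ i, (g i)⁻¹) x
  rw [qf_diag2, qf_tfd] at e
  have ecast : ((∑ i, (g i)⁻¹ : ℝ) : ℂ) * (∑ p : Fin d × Fin d,
        ((g p.1 * g p.2 : ℝ) : ℂ) * (Complex.normSq (x p) : ℂ))
      - (Complex.normSq (∑ i, (Real.sqrt (g i) : ℂ) * x (i, i)) : ℂ)
      = (((∑ i, (g i)⁻¹) * (∑ p : Fin d × Fin d, g p.1 * g p.2 * Complex.normSq (x p))
        - Complex.normSq (∑ i, (Real.sqrt (g i) : ℂ) * x (i, i)) : ℝ) : ℂ) := by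
    push_cast
    ring
  rw [e, ecast]
  rw [Complex.le_def]
  refine ⟨?_, ?_⟩
  · rw [Complex.ofReal_re, Complex.zero_re]
    have := key_cs g hg x
    linarith
  · rw [Complex.ofReal_im, Complex.zero_im]

lemma part2_lb {d : ℕ} (g : Fin d → ℝ) (hg : ∀ i, 0 < g i) (hd : d ≠ 0) (l : ℝ)
    (hl : (((l : ℂ)) • ((Matrix.diagonal fun i => (g i : ℂ))
      ⊗ₖ (Matrix.diagonal fun i => (g i : ℂ))) - tfd g).PosSemidef) :
    (∑ i, (g i)⁻¹) ≤ l := by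
  haveI : Nonempty (Fin d) := ⟨⟨0, Nat.pos_of_ne_zero hd⟩⟩
  set lam0 := ∑ i, (g i)⁻¹ with hlam0
  have hlam0pos : 0 < lam0 := Finset.sum_pos (fun i _ => inv_pos.mpr (hg i)) Finset.univ_nonempty
  set x0 : Fin d × Fin d → ℂ :=
    fun p => if p.1 = p.2 then ((1/(g p.1 * Real.sqrt (g p.1)) : ℝ) : ℂ) else 0 with hx0
  have h := hl.dotProduct_mulVec_nonneg x0
  have e := qf_decomp ((Matrix.diagonal fun i : Fin d => (g i : ℂ))
    ⊗ₖ (Matrix.diagonal fun i => (g i : ℂ))) (tfd g) l x0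
  rw [qf_diag2, qf_tfd] at e
  have hSval : (∑ i, (Real.sqrt (g i) : ℂ) * x0 (i, i)) = ((lam0 : ℝ) : ℂ) := by
    have hterm : ∀ i : Fin d, (Real.sqrt (g i) : ℂ) * x0 (i, i) = (((g i)⁻¹ : ℝ) : ℂ) := by
      intro i
      have hx0ii : x0 (i, i) = ((1/(g i * Real.sqrt (g i)) : ℝ) : ℂ) := if_pos rfl
      rw [hx0ii, ← Complex.ofReal_mul]
      congr 1
      have hs : Real.sqrt (g i) ≠ 0 := ne_of_gt (Real.sqrt_pos.mpr (hg i))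
      have hg' : g i ≠ 0 := ne_of_gt (hg i)
      have h3 : Real.sqrt (g i) * Real.sqrt (g i) = g i := Real.mul_self_sqrt (hg i).le
      field_simp
    rw [Finset.sum_congr rfl fun i _ => hterm i, hlam0]
    push_cast
    rfl
  have hQval : (∑ p : Fin d × Fin d, ((g p.1 * g p.2 : ℝ) : ℂ) * (Complex.normSq (x0 p) : ℂ))
      = ((lam0 : ℝ) : ℂ) := by
    rw [Fintype.sum_prod_type]
    have hin : ∀ i : Fin d, (∑ j, ((g (i, j).1 * g (i, j).2 : ℝ) : ℂ)
        * (Complex.normSq (x0 (i, j)) : ℂ)) = (((g i)⁻¹ : ℝ) : ℂ) := by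
      intro i
      rw [Finset.sum_eq_single_of_mem i (Finset.mem_univ i) ?off]
      · rw [show x0 (i, i) = ((1/(g i * Real.sqrt (g i)) : ℝ) : ℂ) from if_pos rfl,
          Complex.normSq_ofReal, ← Complex.ofReal_mul]
        congr 1
        have hs : Real.sqrt (g i) ≠ 0 := ne_of_gt (Real.sqrt_pos.mpr (hg i))
        have hg' : g i ≠ 0 := ne_of_gt (hg i)
        have h3 : Real.sqrt (g i) * Real.sqrt (g i) = g i := Real.mul_self_sqrt (hg i).le
        field_simp
        linear_combination (-1 : ℝ) * h3
      case off =>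
        intro j _ hj
        rw [show x0 (i, j) = 0 from if_neg (fun hh : i = j => hj hh.symm)]
        simp
    rw [Finset.sum_congr rfl fun i _ => hin i, hlam0]
    push_cast
    rfl
  rw [e, hSval, hQval] at h
  have hre := (Complex.le_def.mp h).1
  rw [Complex.zero_re, Complex.sub_re, Complex.normSq_ofReal] at hre
  have : (↑l * ((lam0:ℝ):ℂ)).re = l * lam0 := by
    rw [← Complex.ofReal_mul, Complex.ofReal_re]
  rw [this] at hre
  simp only [Complex.ofReal_re] at hre
  nlinarith

lemma part1_mem {d : ℕ} {m : Type*} [Fintype m] [DecidableEq m]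
    (g : Fin d → ℝ) (hg : ∀ i, 0 < g i)
    (γB : Matrix m m ℂ) (hB : γB.PosDef)
    (hTrB : ((γB⁻¹).trace).re ≤ ∑ i, (g i)⁻¹)
    (Λ : Matrix (Fin d) (Fin d) ℂ →ₗ[ℂ] Matrix m m ℂ) (hΛ : IsCPTP Λ) :
    ((((∑ i, (g i)⁻¹ : ℝ)) : ℂ) • ((Matrix.diagonal fun i => (g i : ℂ)) ⊗ₖ γB)
      - outTFD g Λ).PosSemidef := by
  have hherm := herm_comb_s13 (∑ i, (g i)⁻¹) (herm_kron g γB hB.1) (herm_outTFD g Λ hΛ.1.1)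
  refine .of_dotProduct_mulVec_nonneg hherm fun x => ?_
  have him := herm_im hherm x
  have e := qf_decomp ((Matrix.diagonal fun i : Fin d => (g i : ℂ)) ⊗ₖ γB) (outTFD g Λ)
    (∑ i, (g i)⁻¹) x
  rw [qf_kron g (fun i => (hg i).le) γB x, qf_outTFD g Λ x] at e
  have hTP : ∀ i k : Fin d, ∑ p, choiMat Λ (i, p) (k, p) = if i = k then (1:ℂ) else 0 := by
    intro i k
    have ht := hΛ.2 (Matrix.single i k 1)
    have h1 : ∑ p, choiMat Λ (i, p) (k, p) = (Λ (Matrix.single i k 1)).trace := rfl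
    rw [h1, ht]
    rcases eq_or_ne i k with hik | hik
    · subst hik; rw [Matrix.trace_single_eq_same, if_pos rfl]
    · rw [Matrix.trace_single_eq_of_ne i k 1 hik, if_neg hik]
  have hcore2 : (star (fun ip : Fin d × m => (Real.sqrt (g ip.1) : ℂ) * x ip) ⬝ᵥ
        choiMat Λ *ᵥ (fun ip : Fin d × m => (Real.sqrt (g ip.1) : ℂ) * x ip)).re
      ≤ ((γB⁻¹).trace).re * ∑ i, (star (fun p => (Real.sqrt (g i) : ℂ) * x (i, p)) ⬝ᵥ
          γB *ᵥ (fun p => (Real.sqrt (g i) : ℂ) * x (i, p))).re :=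
    coreA (choiMat Λ) hΛ.1 hTP γB hB (fun ip => (Real.sqrt (g ip.1) : ℂ) * x ip)
  have hsum_nonneg : 0 ≤ ∑ i, (star (fun p => (Real.sqrt (g i) : ℂ) * x (i, p)) ⬝ᵥ
      γB *ᵥ (fun p => (Real.sqrt (g i) : ℂ) * x (i, p))).re := by
    refine Finset.sum_nonneg fun i _ => ?_
    have := (Complex.le_def.mp (hB.posSemidef.dotProduct_mulVec_nonneg
      (fun p => (Real.sqrt (g i) : ℂ) * x (i, p)))).1
    simpa using this
  refine Complex.le_def.mpr ⟨?_, by rw [Complex.zero_im]; exact him.symm⟩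
  rw [e]
  rw [Complex.zero_re, Complex.sub_re, Complex.mul_re, Complex.ofReal_re, Complex.ofReal_im,
    Complex.re_sum]
  have hmul : (star (fun ip : Fin d × m => (Real.sqrt (g ip.1) : ℂ) * x ip) ⬝ᵥ
        choiMat Λ *ᵥ (fun ip : Fin d × m => (Real.sqrt (g ip.1) : ℂ) * x ip)).re
      ≤ (∑ i, (g i)⁻¹) * ∑ i, (star (fun p => (Real.sqrt (g i) : ℂ) * x (i, p)) ⬝ᵥ
          γB *ᵥ (fun p => (Real.sqrt (g i) : ℂ) * x (i, p))).re :=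
    hcore2.trans (mul_le_mul_of_nonneg_right hTrB hsum_nonneg)
  simp only [zero_mul, sub_zero]
  linarith

lemma part1_bdd {d : ℕ} {m : Type*} [Fintype m] [DecidableEq m] [Nonempty m]
    (g : Fin d → ℝ) (hg : ∀ i, 0 < g i) (hd : d ≠ 0)
    (γB : Matrix m m ℂ) (hB : γB.PosDef)
    (Λ : Matrix (Fin d) (Fin d) ℂ →ₗ[ℂ] Matrix m m ℂ) (hΛ : IsCPTP Λ) (l : ℝ)
    (hl : (((l : ℂ)) • ((Matrix.diagonal fun i => (g i : ℂ)) ⊗ₖ γB)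
      - outTFD g Λ).PosSemidef) : 0 ≤ l := by
  have i0 : Fin d := ⟨0, Nat.pos_of_ne_zero hd⟩
  have p0 : m := Classical.arbitrary m
  set a : Fin d × m := (i0, p0) with ha
  have h := hl.dotProduct_mulVec_nonneg (fun b => if b = a then (1:ℂ) else 0)
  rw [qf_basis] at h
  have hentry : (((l : ℂ)) • ((Matrix.diagonal fun i => (g i : ℂ)) ⊗ₖ γB) - outTFD g Λ) a a
      = (l : ℂ) * ((g i0 : ℂ) * γB p0 p0) - (g i0 : ℂ) * choiMat Λ a a := by
    simp only [Matrix.sub_apply, Matrix.smul_apply, Matrix.kroneckerMap_apply,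
      Matrix.diagonal_apply_eq, smul_eq_mul]
    congr 1
    show outTFD g Λ a a = _
    simp only [outTFD, Matrix.of_apply]
    rw [Real.mul_self_sqrt (hg i0).le]
    rfl
  rw [hentry] at h
  have h1 := (Complex.le_def.mp h).1
  have hBpp : 0 < (γB p0 p0).re := by
    have he : (fun b => if b = p0 then (1:ℂ) else 0) ≠ 0 := by
      intro hcontra
      have h2 := congrFun hcontra p0
      simp at h2
    have h3 := hB.dotProduct_mulVec_pos he
    rw [qf_basis] at h3
    have := (Complex.lt_def.mp h3).1
    simpa using this
  have hCre : 0 ≤ (choiMat Λ a a).re := by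
    have h4 := hΛ.1.dotProduct_mulVec_nonneg (fun b => if b = a then (1:ℂ) else 0)
    rw [qf_basis] at h4
    simpa using (Complex.le_def.mp h4).1
  have hre : ((l : ℂ) * ((g i0 : ℂ) * γB p0 p0) - (g i0 : ℂ) * choiMat Λ a a).re
      = l * (g i0 * (γB p0 p0).re) - g i0 * (choiMat Λ a a).re := by
    simp [Complex.sub_re, Complex.mul_re, Complex.ofReal_re, Complex.ofReal_im]
  rw [Complex.zero_re, hre] at h1
  nlinarith [mul_pos (hg i0) hBpp, mul_nonneg (hg i0).le hCre]

/-- No local channel increases the athermality of the thermofield double: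
for any CPTP `Λ` to a system with thermal state `γ_B` with `Tr(γ_B⁻¹) ≤ Tr(γ⁻¹)`,
`min{λ | (I⊗Λ)(γ̃) ≤ λ(γ ⊗ γ_B)} ≤ Tr(γ⁻¹) = min{λ | γ̃ ≤ λ(γ ⊗ γ)}`. -/
theorem no_local_increase_tfd_athermality
    {d : ℕ} {m : Type*} [Fintype m] [DecidableEq m]
    (g : Fin d → ℝ) (hg : ∀ i, 0 < g i) (hsum : ∑ i, g i = 1)
    (γB : Matrix m m ℂ) (hB : γB.PosDef) (hBtr : γB.trace = 1)
    (hTrB : ((γB⁻¹).trace).re ≤ ∑ i, (g i)⁻¹)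
    (Λ : Matrix (Fin d) (Fin d) ℂ →ₗ[ℂ] Matrix m m ℂ) (hΛ : IsCPTP Λ) :
    sInf {l : ℝ | ((l : ℂ) • ((Matrix.diagonal fun i => (g i : ℂ)) ⊗ₖ γB)
        - outTFD g Λ).PosSemidef} ≤ ∑ i, (g i)⁻¹ ∧
    sInf {l : ℝ | ((l : ℂ) • ((Matrix.diagonal fun i => (g i : ℂ))
        ⊗ₖ (Matrix.diagonal fun i => (g i : ℂ))) - tfd g).PosSemidef}
      = ∑ i, (g i)⁻¹ := by
  classical
  have hd : d ≠ 0 := by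
    rintro rfl
    simp at hsum
  haveI hm : Nonempty m := by
    by_contra hmm
    rw [not_nonempty_iff] at hmm
    rw [Matrix.trace] at hBtr
    rw [Finset.univ_eq_empty, Finset.sum_empty] at hBtr
    exact zero_ne_one hBtr
  constructor
  · exact csInf_le ⟨0, fun l hl => part1_bdd g hg hd γB hB Λ hΛ l hl⟩
      (part1_mem g hg γB hB hTrB Λ hΛ)
  · apply le_antisymm
    · exact csInf_le ⟨∑ i, (g i)⁻¹, fun l hl => part2_lb g hg hd l hl⟩ (part2_mem g hg)
    · exact le_csInf ⟨_, part2_mem g hg⟩ fun l hl => part2_lb g hg hd l hl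
end

section
/- Let γ be a positive-definite density matrix on C^d with eigenvalues g_i, and set σ := (γ ⊗ 𝟙) γ̃ (γ ⊗ 𝟙) = Σ_{i,j} g_i^{3/2} g_j^{3/2} |i⟩⟨j| ⊗ |i⟩⟨j|, where γ̃ is the thermofield double of γ. Then (i) σ (γ^{-1} ⊗ γ^{-1}) σ = σ, (ii) γ ⊗ γ − σ ≥ 0, and (iii) min{f | σ ≤ f (γ ⊗ γ)} = 1. -/
open Matrix ComplexOrder Kronecker

/-- The matrix `σ = (γ ⊗ 𝟙) γ̃ (γ ⊗ 𝟙) = Σ_{i,j} g_i^{3/2} g_j^{3/2} |i⟩⟨j| ⊗ |i⟩⟨j|`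
for `γ = diag(g)`. -/
noncomputable def sigmaTFD {d : ℕ} (g : Fin d → ℝ) :
    Matrix (Fin d × Fin d) (Fin d × Fin d) ℂ :=
  Matrix.of fun p q => if p.1 = p.2 ∧ q.1 = q.2 then
    ((g p.1 * Real.sqrt (g p.1) * (g q.1 * Real.sqrt (g q.1)) : ℝ) : ℂ) else 0

noncomputable def vTFD {d : ℕ} (g : Fin d → ℝ) : Fin d × Fin d → ℂ :=
  fun p => if p.1 = p.2 then ((g p.1 * Real.sqrt (g p.1) : ℝ) : ℂ) else 0

lemma sigma_eq_vec {d : ℕ} (g : Fin d → ℝ) :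
    sigmaTFD g = vecMulVec (vTFD g) (vTFD g) := by
  ext p q
  by_cases h1 : p.1 = p.2 <;> by_cases h2 : q.1 = q.2 <;>
    simp [sigmaTFD, vTFD, vecMulVec_apply, h1, h2]

lemma sum_diag {d : ℕ} {M : Type*} [AddCommMonoid M] (h : Fin d → M) :
    ∑ p : Fin d × Fin d, (if p.1 = p.2 then h p.1 else 0) = ∑ i, h i := by
  rw [Fintype.sum_prod_type]
  simp

lemma star_vTFD {d : ℕ} (g : Fin d → ℝ) : star (vTFD g) = vTFD g := by
  funext p
  simp [vTFD, apply_ite (star : ℂ → ℂ), Complex.conj_ofReal]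

lemma kron_eq {d : ℕ} (g : Fin d → ℝ) :
    ((Matrix.diagonal fun i => (g i : ℂ)) ⊗ₖ (Matrix.diagonal fun i => (g i : ℂ)))
      = Matrix.diagonal (fun p : Fin d × Fin d => ((g p.1 * g p.2 : ℝ) : ℂ)) := by
  rw [Matrix.diagonal_kronecker_diagonal]
  refine congrArg Matrix.diagonal (funext fun p => ?_)
  push_cast
  ring

lemma inv_kron_eq {d : ℕ} (g : Fin d → ℝ) (hg : ∀ i, 0 < g i) :
    ((Matrix.diagonal fun i => (g i : ℂ))⁻¹ ⊗ₖ (Matrix.diagonal fun i => (g i : ℂ))⁻¹)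
      = Matrix.diagonal (fun p : Fin d × Fin d => ((g p.1 : ℂ))⁻¹ * ((g p.2 : ℂ))⁻¹) := by
  have hinv : (Matrix.diagonal fun i => (g i : ℂ))⁻¹
      = Matrix.diagonal (fun i => ((g i : ℂ))⁻¹) := by
    apply Matrix.inv_eq_right_inv
    rw [Matrix.diagonal_mul_diagonal]
    ext i j
    by_cases h : i = j
    · subst h
      simp [Matrix.one_apply_eq,
        mul_inv_cancel₀ (Complex.ofReal_ne_zero.mpr (hg i).ne')]
    · simp [Matrix.diagonal_apply_ne _ h, Matrix.one_apply_ne h]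
  rw [hinv, Matrix.diagonal_kronecker_diagonal]

-- quadratic form of the diagonal part
lemma quad_diag {d : ℕ} (g : Fin d → ℝ) (x : Fin d × Fin d → ℂ) :
    star x ⬝ᵥ ((Matrix.diagonal (fun p : Fin d × Fin d => ((g p.1 * g p.2 : ℝ) : ℂ))) *ᵥ x)
      = ((∑ p : Fin d × Fin d, g p.1 * g p.2 * Complex.normSq (x p) : ℝ) : ℂ) := by
  rw [dotProduct, Complex.ofReal_sum]
  refine Finset.sum_congr rfl fun p _ => ?_
  rw [Matrix.mulVec_diagonal]
  push_cast
  rw [← Complex.mul_conj]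
  simp only [Pi.star_apply, Complex.star_def]
  ring

lemma quad_sigma {d : ℕ} (g : Fin d → ℝ) (x : Fin d × Fin d → ℂ) :
    star x ⬝ᵥ (sigmaTFD g *ᵥ x)
      = ((Complex.normSq (vTFD g ⬝ᵥ x) : ℝ) : ℂ) := by
  rw [sigma_eq_vec]
  have h1 : vecMulVec (vTFD g) (vTFD g) *ᵥ x = (vTFD g ⬝ᵥ x) • vTFD g := by
    funext p
    simp only [Matrix.mulVec, Matrix.vecMulVec_apply, dotProduct, Pi.smul_apply,
      smul_eq_mul, Finset.mul_sum]
    rw [Finset.sum_mul]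
    exact Finset.sum_congr rfl fun q _ => by ring
  rw [h1, dotProduct_smul]
  have h2 : star x ⬝ᵥ vTFD g = (starRingEnd ℂ) (vTFD g ⬝ᵥ x) := by
    rw [star_dotProduct, star_vTFD]
    rfl
  rw [h2, smul_eq_mul, ← Complex.mul_conj]

lemma key_ineq {d : ℕ} (g : Fin d → ℝ) (hg : ∀ i, 0 < g i) (hsum : ∑ i, g i = 1)
    (x : Fin d × Fin d → ℂ) :
    Complex.normSq (vTFD g ⬝ᵥ x)
      ≤ ∑ p : Fin d × Fin d, g p.1 * g p.2 * Complex.normSq (x p) := by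
  set c : Fin d × Fin d → ℝ := fun p => ‖vTFD g p‖ * ‖x p‖ with hc
  have habs : ‖vTFD g ⬝ᵥ x‖ ≤ ∑ p : Fin d × Fin d, c p := by
    rw [dotProduct]
    refine (norm_sum_le _ _).trans_eq ?_
    exact Finset.sum_congr rfl fun p _ => norm_mul _ _
  have hcnn : ∀ p, 0 ≤ c p := fun p => mul_nonneg (norm_nonneg _) (norm_nonneg _)
  have hCS : (∑ p : Fin d × Fin d, c p) ^ 2
      ≤ (∑ p : Fin d × Fin d, (if p.1 = p.2 then g p.1 else 0))
        * ∑ p : Fin d × Fin d, g p.1 * g p.2 * Complex.normSq (x p) := by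
    refine Finset.sum_sq_le_sum_mul_sum_of_sq_eq_mul _ ?_ ?_ ?_
    · intro p _
      split_ifs with h
      · exact (hg _).le
      · exact le_rfl
    · intro p _
      exact mul_nonneg (mul_nonneg (hg _).le (hg _).le) (Complex.normSq_nonneg _)
    · intro p _
      by_cases h : p.1 = p.2
      · simp only [hc, vTFD, if_pos h, Complex.norm_real, Real.norm_eq_abs]
        rw [abs_of_nonneg (mul_nonneg (hg _).le (Real.sqrt_nonneg _))]
        rw [mul_pow, Complex.sq_norm, ← h]
        have hs : Real.sqrt (g p.1) ^ 2 = g p.1 := Real.sq_sqrt (hg _).le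
        have h3 : (g p.1 * Real.sqrt (g p.1)) ^ 2 = g p.1 * (g p.1 * g p.1) := by
          rw [mul_pow, hs]; ring
        rw [h3]; ring
      · simp [hc, vTFD, h]
  have hw : (∑ p : Fin d × Fin d, (if p.1 = p.2 then g p.1 else 0)) = 1 := by
    rw [sum_diag]; exact hsum
  have h1 : Complex.normSq (vTFD g ⬝ᵥ x) ≤ (∑ p : Fin d × Fin d, c p) ^ 2 := by
    rw [← Complex.sq_norm]
    exact pow_le_pow_left₀ (norm_nonneg _) habs 2
  calc Complex.normSq (vTFD g ⬝ᵥ x) ≤ (∑ p : Fin d × Fin d, c p) ^ 2 := h1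
    _ ≤ _ := hCS
    _ = _ := by rw [hw, one_mul]

lemma sigma_herm {d : ℕ} (g : Fin d → ℝ) : (sigmaTFD g).IsHermitian := by
  ext p q
  simp only [Matrix.conjTranspose_apply, sigmaTFD, Matrix.of_apply]
  by_cases h1 : p.1 = p.2 <;> by_cases h2 : q.1 = q.2 <;>
    simp [h1, h2, Complex.star_def, Complex.conj_ofReal, mul_comm]

lemma psd_key {d : ℕ} (g : Fin d → ℝ) (hg : ∀ i, 0 < g i) (hsum : ∑ i, g i = 1)
    (f : ℝ) (hf : 1 ≤ f) :
    ((f : ℂ) • ((Matrix.diagonal fun i => (g i : ℂ))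
        ⊗ₖ (Matrix.diagonal fun i => (g i : ℂ))) - sigmaTFD g).PosSemidef := by
  rw [kron_eq]
  rw [posSemidef_iff_dotProduct_mulVec]
  constructor
  · have hD : (Matrix.diagonal (fun p : Fin d × Fin d => ((g p.1 * g p.2 : ℝ) : ℂ))).IsHermitian := by
      ext p q
      by_cases h : q = p
      · subst h
        simp [Matrix.conjTranspose_apply, Matrix.diagonal_apply_eq, Complex.star_def,
          Complex.conj_ofReal]
      · simp [Matrix.conjTranspose_apply, Matrix.diagonal_apply_ne _ h,
          Matrix.diagonal_apply_ne' _ h]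
    have hsm : (((f : ℂ)) • Matrix.diagonal
        (fun p : Fin d × Fin d => ((g p.1 * g p.2 : ℝ) : ℂ))).IsHermitian := by
      unfold Matrix.IsHermitian
      rw [Matrix.conjTranspose_smul, hD]
      congr 1
      simp [Complex.star_def, Complex.conj_ofReal]
    exact hsm.sub (sigma_herm g)
  · intro x
    rw [Matrix.sub_mulVec, Matrix.smul_mulVec, dotProduct_sub, dotProduct_smul,
      quad_diag, quad_sigma]
    rw [smul_eq_mul, ← Complex.ofReal_mul, ← Complex.ofReal_sub]
    rw [Complex.zero_le_real]
    have hT : 0 ≤ ∑ p : Fin d × Fin d, g p.1 * g p.2 * Complex.normSq (x p) :=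
      Finset.sum_nonneg fun p _ =>
        mul_nonneg (mul_nonneg (hg _).le (hg _).le) (Complex.normSq_nonneg _)
    nlinarith [key_ineq g hg hsum x]

lemma part_one {d : ℕ} (g : Fin d → ℝ) (hg : ∀ i, 0 < g i) (hsum : ∑ i, g i = 1) :
    sigmaTFD g * ((Matrix.diagonal fun i => (g i : ℂ))⁻¹
        ⊗ₖ (Matrix.diagonal fun i => (g i : ℂ))⁻¹) * sigmaTFD g = sigmaTFD g := by
  rw [inv_kron_eq g hg, sigma_eq_vec]
  set v := vTFD g with hv
  set e : Fin d × Fin d → ℂ := fun p => ((g p.1 : ℂ))⁻¹ * ((g p.2 : ℂ))⁻¹ with he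
  have h1 : vecMulVec v v * Matrix.diagonal e = vecMulVec v (fun q => v q * e q) := by
    ext p q
    rw [Matrix.mul_diagonal]
    simp only [Matrix.vecMulVec_apply]
    ring
  have h2 : vecMulVec v (fun q => v q * e q) * vecMulVec v v
      = (((fun q => v q * e q) ⬝ᵥ v)) • vecMulVec v v := by
    ext p q
    simp only [Matrix.mul_apply, Matrix.vecMulVec_apply, Matrix.smul_apply, dotProduct,
      smul_eq_mul, Finset.sum_mul]
    exact Finset.sum_congr rfl fun r _ => by ring
  have h3 : ((fun q => v q * e q) ⬝ᵥ v) = 1 := by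
    rw [dotProduct]
    have hterm : ∀ q : Fin d × Fin d,
        v q * e q * v q = (if q.1 = q.2 then ((g q.1 : ℝ) : ℂ) else 0) := by
      intro q
      by_cases h : q.1 = q.2
      · simp only [hv, vTFD, he, if_pos h, ← h]
        have hne : (g q.1 : ℂ) ≠ 0 := Complex.ofReal_ne_zero.mpr (hg _).ne'
        have hs : (Real.sqrt (g q.1) : ℂ) * (Real.sqrt (g q.1) : ℂ) = (g q.1 : ℂ) := by
          rw [← Complex.ofReal_mul, Real.mul_self_sqrt (hg _).le]
        push_cast
        field_simp
        linear_combination hs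
      · simp [hv, vTFD, h]
    rw [Finset.sum_congr rfl fun q _ => hterm q,
      sum_diag (fun i => ((g i : ℝ) : ℂ)), ← Complex.ofReal_sum, hsum,
      Complex.ofReal_one]
  rw [h1, h2, h3, one_smul, ← sigma_eq_vec]

lemma lower_bound {d : ℕ} [NeZero d] (g : Fin d → ℝ) (hg : ∀ i, 0 < g i)
    (hsum : ∑ i, g i = 1) (f : ℝ)
    (h : ((f : ℂ) • ((Matrix.diagonal fun i => (g i : ℂ))
        ⊗ₖ (Matrix.diagonal fun i => (g i : ℂ))) - sigmaTFD g).PosSemidef) : 1 ≤ f := by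
  rw [kron_eq] at h
  set w : Fin d × Fin d → ℂ :=
    fun p => if p.1 = p.2 then (((Real.sqrt (g p.1))⁻¹ : ℝ) : ℂ) else 0 with hw
  have hsne : ∀ i, Real.sqrt (g i) ≠ 0 := fun i =>
    (Real.sqrt_pos.mpr (hg i)).ne'
  have hself : ∀ i, Real.sqrt (g i) * Real.sqrt (g i) = g i := fun i =>
    Real.mul_self_sqrt (hg i).le
  have hT : ∑ p : Fin d × Fin d, g p.1 * g p.2 * Complex.normSq (w p) = 1 := by
    have hterm : ∀ p : Fin d × Fin d,
        g p.1 * g p.2 * Complex.normSq (w p) = (if p.1 = p.2 then g p.1 else 0) := by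
      intro p
      by_cases hp : p.1 = p.2
      · simp only [hw, if_pos hp, Complex.normSq_ofReal, ← hp]
        rw [← mul_inv, hself]
        field_simp
        simp
      · simp [hw, hp]
    rw [Finset.sum_congr rfl fun p _ => hterm p, sum_diag g, hsum]
  have hS : vTFD g ⬝ᵥ w = 1 := by
    rw [dotProduct]
    have hterm : ∀ p : Fin d × Fin d,
        vTFD g p * w p = (if p.1 = p.2 then ((g p.1 : ℝ) : ℂ) else 0) := by
      intro p
      by_cases hp : p.1 = p.2
      · simp only [vTFD, hw, if_pos hp]
        rw [← Complex.ofReal_mul]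
        congr 1
        rw [mul_assoc, mul_inv_cancel₀ (hsne _), mul_one]
      · simp [vTFD, hw, hp]
    rw [Finset.sum_congr rfl fun p _ => hterm p,
      sum_diag (fun i => ((g i : ℝ) : ℂ)), ← Complex.ofReal_sum, hsum, Complex.ofReal_one]
  have hq := h.dotProduct_mulVec_nonneg w
  rw [Matrix.sub_mulVec, Matrix.smul_mulVec, dotProduct_sub, dotProduct_smul,
    quad_diag, quad_sigma, hT, hS] at hq
  rw [show ((f : ℂ) • ((1 : ℝ) : ℂ) - ((Complex.normSq 1 : ℝ) : ℂ))
      = ((f - 1 : ℝ) : ℂ) by simp [Complex.normSq_one]] at hq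
  rw [Complex.zero_le_real] at hq
  linarith

/-- Properties of `σ = (γ ⊗ 𝟙) γ̃ (γ ⊗ 𝟙)`:
(i) `σ (γ⁻¹ ⊗ γ⁻¹) σ = σ`, (ii) `γ ⊗ γ − σ ≥ 0`, (iii) `min{f | σ ≤ f(γ ⊗ γ)} = 1`. -/
theorem sigma_tfd_properties {d : ℕ} [NeZero d]
    (g : Fin d → ℝ) (hg : ∀ i, 0 < g i) (hsum : ∑ i, g i = 1) :
    sigmaTFD g * ((Matrix.diagonal fun i => (g i : ℂ))⁻¹
        ⊗ₖ (Matrix.diagonal fun i => (g i : ℂ))⁻¹) * sigmaTFD g = sigmaTFD g ∧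
    (((Matrix.diagonal fun i => (g i : ℂ)) ⊗ₖ (Matrix.diagonal fun i => (g i : ℂ)))
        - sigmaTFD g).PosSemidef ∧
    sInf {f : ℝ | ((f : ℂ) • ((Matrix.diagonal fun i => (g i : ℂ))
        ⊗ₖ (Matrix.diagonal fun i => (g i : ℂ))) - sigmaTFD g).PosSemidef} = 1 := by
  refine ⟨part_one g hg hsum, ?_, ?_⟩
  · have := psd_key g hg hsum 1 le_rfl
    simpa using this
  · have hset : {f : ℝ | ((f : ℂ) • ((Matrix.diagonal fun i => (g i : ℂ))
        ⊗ₖ (Matrix.diagonal fun i => (g i : ℂ))) - sigmaTFD g).PosSemidef} = Set.Ici 1 :=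
      Set.ext fun f => ⟨fun h => lower_bound g hg hsum f h, fun hf => psd_key g hg hsum f hf⟩
    rw [hset]
    exact csInf_Ici
end

section
/- Robustness of athermality preservability of a mixture with the completely thermalising channel: for γ a positive-definite density matrix on C^d, q ∈ [0,1], and J_q := q (𝟙 ⊗ γ) + (1−q)|φ^+⟩⟨φ^+| (the Choi matrix of q·Γ + (1−q)·Identity), one has min{λ | J_q ≤ λ (𝟙 ⊗ γ)} = q + (1−q) Tr(γ^{-1}). -/
open Matrix ComplexOrder Kronecker

section aux
variable {d : ℕ} (g : Fin d → ℝ)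

lemma herm_smul_real {n : Type*} [Fintype n] {A : Matrix n n ℂ} (h : A.IsHermitian)
    (r : ℝ) : ((r : ℂ) • A).IsHermitian := by
  rw [Matrix.IsHermitian, Matrix.conjTranspose_smul, h.eq, Complex.star_def,
    Complex.conj_ofReal]

lemma K_mulVec (v : Fin d × Fin d → ℂ) (p : Fin d × Fin d) :
    (((1 : Matrix (Fin d) (Fin d) ℂ) ⊗ₖ (Matrix.diagonal fun i => (g i : ℂ))) *ᵥ v) p
      = (g p.2 : ℂ) * v p := by
  cases p with
  | mk i j =>
    simp only [Matrix.mulVec, dotProduct, Fintype.sum_prod_type,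
      Matrix.kroneckerMap_apply, Matrix.one_apply, Matrix.diagonal_apply]
    simp [ite_and, mul_ite, ite_mul, Finset.sum_ite_eq, Finset.sum_ite_eq']

lemma P_mulVec (v : Fin d × Fin d → ℂ) (p : Fin d × Fin d) :
    ((phiPlusProj d) *ᵥ v) p = if p.1 = p.2 then (∑ k, v (k, k)) else 0 := by
  cases p with
  | mk i j =>
    simp only [Matrix.mulVec, dotProduct, Fintype.sum_prod_type, phiPlusProj,
      Matrix.of_apply]
    simp [ite_and, mul_ite, ite_mul, Finset.sum_ite_eq, Finset.sum_ite_eq']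

lemma K_quad (v : Fin d × Fin d → ℂ) :
    star v ⬝ᵥ (((1 : Matrix (Fin d) (Fin d) ℂ) ⊗ₖ (Matrix.diagonal fun i => (g i : ℂ))) *ᵥ v)
      = ((∑ p, g p.2 * Complex.normSq (v p) : ℝ) : ℂ) := by
  simp only [dotProduct, K_mulVec, Pi.star_apply]
  push_cast
  congr 1; ext p
  rw [Complex.normSq_eq_conj_mul_self]
  simp only [Complex.star_def]
  ring

lemma P_quad (v : Fin d × Fin d → ℂ) :
    star v ⬝ᵥ ((phiPlusProj d) *ᵥ v)
      = ((Complex.normSq (∑ k, v (k, k)) : ℝ) : ℂ) := by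
  simp only [dotProduct, P_mulVec, Pi.star_apply, Fintype.sum_prod_type]
  rw [Complex.normSq_eq_conj_mul_self, map_sum, Finset.sum_mul]
  congr 1; ext i
  simp [mul_ite, ite_mul, Finset.sum_ite_eq', Finset.mul_sum, Complex.star_def]

lemma K_herm : (((1 : Matrix (Fin d) (Fin d) ℂ) ⊗ₖ (Matrix.diagonal fun i => (g i : ℂ)))).IsHermitian := by
  ext p r
  simp only [Matrix.conjTranspose_apply, Matrix.kroneckerMap_apply, Matrix.one_apply,
    Matrix.diagonal_apply]
  by_cases h1 : r.1 = p.1 <;> by_cases h2 : r.2 = p.2 <;>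
    simp [h1, h2, eq_comm, Ne.symm]

lemma P_herm : (phiPlusProj d).IsHermitian := by
  ext p r
  simp only [Matrix.conjTranspose_apply, phiPlusProj, Matrix.of_apply]
  by_cases h1 : r.1 = r.2 <;> by_cases h2 : p.1 = p.2 <;> simp [h1, h2]

lemma key_ineq_s16 (hg : ∀ i, 0 < g i) (u : Fin d → ℂ) :
    Complex.normSq (∑ k, u k) ≤ (∑ i, (g i)⁻¹) * ∑ i, g i * Complex.normSq (u i) := by
  have h1 : ‖∑ k, u k‖ ≤ ∑ k, ‖u k‖ := by
    simpa using norm_sum_le Finset.univ u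
  have h2 : (∑ k, ‖u k‖) ^ 2
      ≤ (∑ i, (g i)⁻¹) * ∑ i, g i * Complex.normSq (u i) := by
    have cs := Finset.sum_mul_sq_le_sq_mul_sq Finset.univ
      (fun i => Real.sqrt (g i)⁻¹) (fun i => Real.sqrt (g i) * ‖u i‖)
    calc (∑ k, ‖u k‖) ^ 2
        = (∑ i, Real.sqrt (g i)⁻¹ * (Real.sqrt (g i) * ‖u i‖)) ^ 2 := by
          congr 1; apply Finset.sum_congr rfl; intro i _
          rw [← mul_assoc, ← Real.sqrt_mul (inv_nonneg.mpr (hg i).le),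
            inv_mul_cancel₀ (hg i).ne', Real.sqrt_one, one_mul]
      _ ≤ (∑ i, Real.sqrt (g i)⁻¹ ^ 2) * ∑ i, (Real.sqrt (g i) * ‖u i‖) ^ 2 := cs
      _ = (∑ i, (g i)⁻¹) * ∑ i, g i * Complex.normSq (u i) := by
          congr 1
          · apply Finset.sum_congr rfl; intro i _
            rw [Real.sq_sqrt (inv_nonneg.mpr (hg i).le)]
          · apply Finset.sum_congr rfl; intro i _
            rw [mul_pow, Real.sq_sqrt (hg i).le, Complex.sq_norm]
  calc Complex.normSq (∑ k, u k) = ‖∑ k, u k‖ ^ 2 := (Complex.sq_norm _).symm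
    _ ≤ (∑ k, ‖u k‖) ^ 2 := by
        apply pow_le_pow_left₀ (by positivity) h1
    _ ≤ _ := h2

end aux

/-- Athermality preservability of `qΓ + (1−q)·Identity`: with Choi matrix
`J_q = q(𝟙 ⊗ γ) + (1−q)|φ⁺⟩⟨φ⁺|`, one has
`min{λ | J_q ≤ λ(𝟙 ⊗ γ)} = q + (1−q)Tr(γ⁻¹)`. -/
theorem preservability_mixture_thermalising {d : ℕ}
    (g : Fin d → ℝ) (hg : ∀ i, 0 < g i) (hsum : ∑ i, g i = 1)
    (q : ℝ) (hq : q ∈ Set.Icc (0 : ℝ) 1) :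
    sInf {l : ℝ | ((l : ℂ) • ((1 : Matrix (Fin d) (Fin d) ℂ)
        ⊗ₖ (Matrix.diagonal fun i => (g i : ℂ)))
      - ((q : ℂ) • ((1 : Matrix (Fin d) (Fin d) ℂ)
          ⊗ₖ (Matrix.diagonal fun i => (g i : ℂ)))
        + ((1 - q : ℝ) : ℂ) • phiPlusProj d)).PosSemidef}
      = q + (1 - q) * ∑ i, (g i)⁻¹ := by
  have hd : 0 < d := by
    by_contra h
    push_neg at h
    interval_cases d
    simp at hsum
  set T : ℝ := ∑ i, (g i)⁻¹ with hT
  have hTpos : 0 < T := by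
    have : Nonempty (Fin d) := ⟨⟨0, hd⟩⟩
    exact Finset.sum_pos (fun i _ => inv_pos.mpr (hg i)) Finset.univ_nonempty
  set c : ℝ := 1 - q with hc
  have hc0 : 0 ≤ c := by simp only [hc, sub_nonneg]; exact hq.2
  set K : Matrix (Fin d × Fin d) (Fin d × Fin d) ℂ :=
    (1 : Matrix (Fin d) (Fin d) ℂ) ⊗ₖ (Matrix.diagonal fun i => (g i : ℂ)) with hK
  have quad : ∀ (l : ℝ) (v : Fin d × Fin d → ℂ),
      star v ⬝ᵥ (((l : ℂ) • K - ((q : ℂ) • K + ((1 - q : ℝ) : ℂ) • phiPlusProj d)) *ᵥ v)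
        = (((l - q) * (∑ p, g p.2 * Complex.normSq (v p))
            - c * Complex.normSq (∑ k, v (k, k)) : ℝ) : ℂ) := by
    intro l v
    rw [Matrix.sub_mulVec, Matrix.add_mulVec, Matrix.smul_mulVec,
      Matrix.smul_mulVec, Matrix.smul_mulVec,
      dotProduct_sub, dotProduct_add, dotProduct_smul,
      dotProduct_smul, dotProduct_smul, K_quad, P_quad]
    simp only [smul_eq_mul, hc]
    push_cast
    ring
  have hset : {l : ℝ | ((l : ℂ) • K
      - ((q : ℂ) • K + ((1 - q : ℝ) : ℂ) • phiPlusProj d)).PosSemidef}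
      = Set.Ici (q + c * T) := by
    ext l
    simp only [Set.mem_setOf_eq, Set.mem_Ici]
    constructor
    · intro hpsd
      have hv := hpsd.dotProduct_mulVec_nonneg (fun p => if p.1 = p.2 then ((g p.1 : ℂ))⁻¹ else 0)
      rw [quad, Complex.zero_le_real] at hv
      have e1 : (∑ p : Fin d × Fin d, g p.2 * Complex.normSq
          (if p.1 = p.2 then ((g p.1 : ℂ))⁻¹ else 0)) = T := by
      
        rw [Fintype.sum_prod_type, hT]
        apply Finset.sum_congr rfl; intro i _
        rw [Finset.sum_eq_single i]
        · have h2 : Complex.normSq ((g i : ℂ))⁻¹ = ((g i)⁻¹) ^ 2 := by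
            rw [map_inv₀, Complex.normSq_ofReal]; ring
          have h4 : g i * ((g i)⁻¹) ^ 2 = (g i)⁻¹ := by
            rw [sq, ← mul_assoc, mul_inv_cancel₀ (hg i).ne', one_mul]
          norm_num [h2]
          rw [sq, mul_inv, ← mul_assoc, mul_inv_cancel₀ (hg i).ne', one_mul]
        · intro b _ hb; simp [Ne.symm hb]
        · simp
      have e2 : Complex.normSq (∑ k : Fin d,
          (if (k, k).1 = (k, k).2 then ((g (k,k).1 : ℂ))⁻¹ else 0)) = T ^ 2 := by
        have h3 : (∑ k : Fin d,
            (if ((k, k) : Fin d × Fin d).1 = (k, k).2 then ((g k : ℂ))⁻¹ else 0))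
              = ((∑ i, (g i)⁻¹ : ℝ) : ℂ) := by
          push_cast
          norm_num
        rw [h3, Complex.normSq_ofReal, ← hT]; ring
      rw [e1, e2] at hv
      nlinarith [hTpos]
    · intro hl
      refine Matrix.PosSemidef.of_dotProduct_mulVec_nonneg ?_ ?_
      · apply Matrix.IsHermitian.sub
        · exact herm_smul_real (K_herm g) l
        · exact Matrix.IsHermitian.add (herm_smul_real (K_herm g) q)
            (herm_smul_real P_herm (1 - q))
      · intro v
        rw [quad, Complex.zero_le_real]
        have hB := key_ineq_s16 g hg (fun k => v (k, k))
        have hA : (0 : ℝ) ≤ ∑ p, g p.2 * Complex.normSq (v p) := by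
          apply Finset.sum_nonneg; intro p _
          exact mul_nonneg (hg p.2).le (Complex.normSq_nonneg _)
        have hdiag : (∑ i, g i * Complex.normSq (v (i, i)))
            ≤ ∑ p, g p.2 * Complex.normSq (v p) := by
          rw [Fintype.sum_prod_type]
          apply Finset.sum_le_sum
          intro i _
          exact Finset.single_le_sum
            (f := fun j => g (i, j).2 * Complex.normSq (v (i, j)))
            (fun j _ => mul_nonneg (hg _).le (Complex.normSq_nonneg _))
            (Finset.mem_univ i)
        have hB' : Complex.normSq (∑ k, v (k, k))
            ≤ T * ∑ p, g p.2 * Complex.normSq (v p) := by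
          calc Complex.normSq (∑ k, v (k, k))
              ≤ T * ∑ i, g i * Complex.normSq (v (i, i)) := hB
            _ ≤ T * ∑ p, g p.2 * Complex.normSq (v p) :=
                mul_le_mul_of_nonneg_left hdiag hTpos.le
        nlinarith [mul_le_mul_of_nonneg_left hB' hc0,
          mul_le_mul_of_nonneg_right (sub_le_sub_right hl q) hA]
  rw [hset, csInf_Ici, hc]
end

section
/- Lower bound in the GPO dilation: let Λ be a CPTP map from A to B, and suppose there exist a density matrix ρ_C on C and a CPTP map G from C⊗A to B with G(γ_C ⊗ γ_A) = γ_B and G(ρ_C ⊗ X) = Λ(X) for all X. Then min{λ | J_Λ ≤ λ (𝟙_A ⊗ γ_B)} ≤ min{λ | J_G ≤ λ (𝟙_C ⊗ 𝟙_A ⊗ γ_B)}, i.e., R(Λ||Γ) ≤ P_T(G). -/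
open Matrix ComplexOrder Kronecker

/- ### Auxiliary lemmas -/

lemma psd_empty {n : Type*} [Fintype n] [DecidableEq n] [IsEmpty n]
    (M : Matrix n n ℂ) : M.PosSemidef := by
  refine ⟨?_, fun x => by rw [Subsingleton.elim x 0]; simp⟩
  ext i
  exact isEmptyElim i

lemma psd_diag_nonneg {n : Type*} [Fintype n] [DecidableEq n] {M : Matrix n n ℂ}
    (hM : M.PosSemidef) (i : n) : 0 ≤ M i i := by
  have := hM.dotProduct_mulVec_nonneg (Pi.single i 1)
  simpa [dotProduct, mulVec, Pi.single_apply, Finset.sum_ite_eq] using this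

lemma kron_conjT {m n : Type*} [Fintype m] [Fintype n]
    (A : Matrix m m ℂ) (B : Matrix n n ℂ) : (A ⊗ₖ B)ᴴ = Aᴴ ⊗ₖ Bᴴ := by
  ext ⟨i, k⟩ ⟨j, l⟩
  simp [conjTranspose_apply, kroneckerMap_apply]

lemma kron_psd {m n : Type*} [Fintype m] [Fintype n] [DecidableEq m] [DecidableEq n]
    {M : Matrix m m ℂ} {N : Matrix n n ℂ} (hM : M.PosSemidef) (hN : N.PosSemidef) :
    (M ⊗ₖ N).PosSemidef := by
  exact hM.kronecker hN

lemma smul_psd {n : Type*} [Fintype n] {M : Matrix n n ℂ} {r : ℝ} (hr : 0 ≤ r)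
    (hM : M.PosSemidef) : ((r : ℂ) • M).PosSemidef := by
  constructor
  · have h := hM.1
    rw [IsHermitian, conjTranspose_smul, h]
    simp
  · intro x
    exact (hM.smul (a := (r:ℂ)) (by exact_mod_cast Complex.zero_le_real.mpr hr)).2 x

lemma herm_le_smul_one_s17 {n : Type*} [Fintype n] [DecidableEq n] {N : Matrix n n ℂ}
    (hN : N.IsHermitian) : ∃ t : ℝ, 0 ≤ t ∧ (((t : ℂ)) • 1 - N).PosSemidef := by
  classical
  set d := hN.eigenvalues with hd
  set t : ℝ := ∑ i, |d i| with ht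
  have ht0 : 0 ≤ t := Finset.sum_nonneg fun i _ => abs_nonneg _
  refine ⟨t, ht0, ?_⟩
  set U : Matrix n n ℂ := (hN.eigenvectorUnitary : Matrix n n ℂ) with hU
  have hUU : U * star U = 1 := (Matrix.mem_unitaryGroup_iff).mp hN.eigenvectorUnitary.2
  have hspec : N = U * diagonal (RCLike.ofReal ∘ d) * star U := hN.spectral_theorem
  have key : (t : ℂ) • 1 - N = U * (diagonal fun i => ((t - d i : ℝ) : ℂ)) * Uᴴ := by
    have h1 : (t : ℂ) • (1 : Matrix n n ℂ) = U * ((t : ℂ) • 1) * star U := by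
      rw [mul_smul_comm, smul_mul_assoc, mul_one, hUU]
    rw [h1, hspec, star_eq_conjTranspose, ← sub_mul, ← mul_sub]
    congr 1
    congr 1
    ext i j
    by_cases h : i = j
    · simp [h, one_apply, Complex.ofReal_sub]
    · simp [h, one_apply]
  rw [key]
  apply Matrix.PosSemidef.mul_mul_conjTranspose_same
  apply Matrix.PosSemidef.diagonal
  intro i
  have hle : d i ≤ t := by
    calc d i ≤ |d i| := le_abs_self _
    _ ≤ t := Finset.single_le_sum (f := fun i => |d i|) (fun i _ => abs_nonneg _)
      (Finset.mem_univ i)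
  show (0:ℂ) ≤ ((t - d i : ℝ) : ℂ)
  exact Complex.zero_le_real.mpr (by linarith)

lemma posdef_smul_one_le {n : Type*} [Fintype n] [DecidableEq n] [Nonempty n]
    {M : Matrix n n ℂ} (hM : M.PosDef) :
    ∃ μ : ℝ, 0 < μ ∧ (M - (μ : ℂ) • 1).PosSemidef := by
  classical
  set d := hM.1.eigenvalues with hd
  set μ : ℝ := Finset.univ.inf' Finset.univ_nonempty d with hμ
  have hμ0 : 0 < μ := by
    rw [hμ, Finset.lt_inf'_iff]
    exact fun i _ => hM.eigenvalues_pos i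
  refine ⟨μ, hμ0, ?_⟩
  set U : Matrix n n ℂ := (hM.1.eigenvectorUnitary : Matrix n n ℂ) with hU
  have hUU : U * star U = 1 := (Matrix.mem_unitaryGroup_iff).mp hM.1.eigenvectorUnitary.2
  have hspec : M = U * diagonal (RCLike.ofReal ∘ d) * star U := hM.1.spectral_theorem
  have key : M - (μ : ℂ) • 1 = U * (diagonal fun i => ((d i - μ : ℝ) : ℂ)) * Uᴴ := by
    have h1 : (μ : ℂ) • (1 : Matrix n n ℂ) = U * ((μ : ℂ) • 1) * star U := by
      rw [mul_smul_comm, smul_mul_assoc, mul_one, hUU]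
    rw [h1, hspec, star_eq_conjTranspose, ← sub_mul, ← mul_sub]
    congr 1
    congr 1
    ext i j
    by_cases h : i = j
    · simp [h, one_apply, Complex.ofReal_sub]
    · simp [h, one_apply]
  rw [key]
  apply Matrix.PosSemidef.mul_mul_conjTranspose_same
  apply Matrix.PosSemidef.diagonal
  intro i
  have hle : μ ≤ d i := Finset.inf'_le _ (Finset.mem_univ i)
  show (0:ℂ) ≤ ((d i - μ : ℝ) : ℂ)
  exact Complex.zero_le_real.mpr (by linarith)

/-- Lower bound in the GPO dilation: if a channel `Λ` is simulated as
`Λ(X) = G(ρ_C ⊗ X)` by a Gibbs-preserving channel `G`, then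
`R(Λ‖Γ) ≤ P_T(G)`, i.e.
`min{λ | J_Λ ≤ λ(𝟙_A ⊗ γ_B)} ≤ min{λ | J_G ≤ λ(𝟙_C ⊗ 𝟙_A ⊗ γ_B)}`. -/
theorem gpo_dilation_lower_bound
    {a b c : Type*} [Fintype a] [DecidableEq a] [Fintype b] [DecidableEq b]
    [Fintype c] [DecidableEq c]
    (γA : Matrix a a ℂ) (γB : Matrix b b ℂ) (γC : Matrix c c ℂ)
    (hA : γA.PosDef) (hAtr : γA.trace = 1)
    (hB : γB.PosDef) (hBtr : γB.trace = 1)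
    (hC : γC.PosDef) (hCtr : γC.trace = 1)
    (ρC : Matrix c c ℂ) (hρC : IsDensity ρC)
    (Λ : Matrix a a ℂ →ₗ[ℂ] Matrix b b ℂ) (hΛ : IsCPTP Λ)
    (G : Matrix (c × a) (c × a) ℂ →ₗ[ℂ] Matrix b b ℂ) (hG : IsCPTP G)
    (hGibbs : G (γC ⊗ₖ γA) = γB)
    (hsim : ∀ X : Matrix a a ℂ, G (ρC ⊗ₖ X) = Λ X) :
    sInf {l : ℝ | ((l : ℂ) • ((1 : Matrix a a ℂ) ⊗ₖ γB) - choiMat Λ).PosSemidef}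
      ≤ sInf {l : ℝ | ((l : ℂ) • ((1 : Matrix (c × a) (c × a) ℂ) ⊗ₖ γB)
          - choiMat G).PosSemidef} := by
  classical
  rcases isEmpty_or_nonempty a with hea | hna
  · haveI : IsEmpty (a × b) := ⟨fun p => IsEmpty.false p.1⟩
    haveI : IsEmpty ((c × a) × b) := ⟨fun p => IsEmpty.false p.1.2⟩
    have h1 : {l : ℝ | ((l : ℂ) • ((1 : Matrix a a ℂ) ⊗ₖ γB) - choiMat Λ).PosSemidef}
        = Set.univ := Set.eq_univ_of_forall fun l => psd_empty _
    have h2 : {l : ℝ | ((l : ℂ) • ((1 : Matrix (c × a) (c × a) ℂ) ⊗ₖ γB)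
        - choiMat G).PosSemidef} = Set.univ := Set.eq_univ_of_forall fun l => psd_empty _
    rw [h1, h2]
  · have hbne : Nonempty b := by
      by_contra h
      rw [not_nonempty_iff] at h
      have h0 : γB.trace = 0 := by simp [Matrix.trace]
      rw [hBtr] at h0
      exact one_ne_zero h0
    have hcne : Nonempty c := by
      by_contra h
      rw [not_nonempty_iff] at h
      have h0 : γC.trace = 0 := by simp [Matrix.trace]
      rw [hCtr] at h0
      exact one_ne_zero h0
    haveI := hbne
    haveI := hcne
    apply csInf_le_csInf
    · -- bounded below by 0
      refine ⟨0, fun l hl => ?_⟩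
      simp only [Set.mem_setOf_eq] at hl
      obtain ⟨i⟩ := hna
      obtain ⟨k⟩ := hbne
      have h1 := psd_diag_nonneg hl (i, k)
      have h2 := psd_diag_nonneg hΛ.1 (i, k)
      have h3 : ((l:ℂ) • ((1 : Matrix a a ℂ) ⊗ₖ γB) - choiMat Λ) (i,k) (i,k)
          + choiMat Λ (i,k) (i,k) = (l:ℂ) * γB k k := by
        simp [Matrix.sub_apply, kroneckerMap_apply, one_apply]
      have h4 : 0 ≤ (l:ℂ) * γB k k := h3 ▸ add_nonneg h1 h2
      have h5 : 0 < γB k k := by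
        have := hB.dotProduct_mulVec_pos (x := Pi.single k 1) (by
          intro hz
          have := congrFun hz k
          simp [Pi.single_eq_same] at this)
        simpa [dotProduct, mulVec, Pi.single_apply, Finset.sum_ite_eq] using this
      have hre : 0 < (γB k k).re ∧ (γB k k).im = 0 := by
        rw [Complex.lt_def] at h5
        exact ⟨by simpa using h5.1, by simpa using h5.2.symm⟩
      have h6 : 0 ≤ ((l:ℂ) * γB k k).re := by
        rw [Complex.le_def] at h4
        simpa using h4.1
      rw [Complex.mul_re] at h6
      simp only [Complex.ofReal_re, Complex.ofReal_im, zero_mul, sub_zero] at h6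
      nlinarith [hre.1, hre.2, h6]
    · -- right-hand set nonempty
      obtain ⟨t, ht0, htp⟩ := herm_le_smul_one_s17 hG.1.1
      obtain ⟨μ, hμ0, hμp⟩ := posdef_smul_one_le hB
      refine ⟨t / μ, ?_⟩
      simp only [Set.mem_setOf_eq]
      have hker : ((1:Matrix (c×a) (c×a) ℂ) ⊗ₖ γB) - (μ:ℂ) • 1
          = (1:Matrix (c×a) (c×a) ℂ) ⊗ₖ (γB - (μ:ℂ) • 1) := by
        ext ⟨u, k⟩ ⟨v, l⟩
        by_cases h : u = v
        · by_cases h2 : k = l <;>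
            simp [h, h2, kroneckerMap_apply, one_apply, Matrix.sub_apply, Prod.ext_iff]
        · simp [h, kroneckerMap_apply, one_apply, Matrix.sub_apply, Prod.ext_iff]
      have hcast : ((t/μ : ℝ):ℂ) * (μ:ℂ) = ((t:ℝ):ℂ) := by
        push_cast
        field_simp
      have hdecomp : ((t/μ : ℝ):ℂ) • ((1:Matrix (c×a) (c×a) ℂ) ⊗ₖ γB) - choiMat G
          = ((t/μ : ℝ):ℂ) • (((1:Matrix (c×a) (c×a) ℂ) ⊗ₖ γB) - (μ:ℂ) • 1)
            + (((t:ℝ):ℂ) • 1 - choiMat G) := by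
        rw [smul_sub, smul_smul, hcast]
        abel
      rw [hdecomp, hker]
      exact (smul_psd (div_nonneg ht0 hμ0.le) (kron_psd Matrix.PosSemidef.one hμp)).add htp
    · -- inclusion
      intro l hl
      simp only [Set.mem_setOf_eq] at hl ⊢
      set D := (l:ℂ) • ((1:Matrix (c×a) (c×a) ℂ) ⊗ₖ γB) - choiMat G with hDdef
      open scoped MatrixOrder in
      obtain ⟨S, hSS⟩ := CStarAlgebra.nonneg_iff_eq_star_mul_self.mp hρC.1.nonneg
      have hρS : ∀ p q : c, ρC p q = ∑ m : c, (starRingEnd ℂ) (S m p) * S m q := by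
        intro p q
        calc ρC p q = (Sᴴ * S) p q := by rw [← star_eq_conjTranspose, ← hSS]
        _ = ∑ m : c, (starRingEnd ℂ) (S m p) * S m q := by
          simp [mul_apply, conjTranspose_apply, Complex.star_def]
      have key : ∀ u v : a × b, ((l:ℂ) • ((1:Matrix a a ℂ) ⊗ₖ γB) - choiMat Λ) u v
          = ∑ p : c, ∑ q : c, ρC p q * D ((p, u.1), u.2) ((q, v.1), v.2) := by
        rintro ⟨i, k⟩ ⟨j, l'⟩
        have hchoi : choiMat Λ (i,k) (j,l') = ∑ p : c, ∑ q : c,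
            ρC p q * choiMat G ((p,i),k) ((q,j),l') := by
          have hexp : (ρC ⊗ₖ single i j (1:ℂ)) =
              ∑ p : c, ∑ q : c, ρC p q • single ((p,i)) ((q,j)) (1:ℂ) := by
            ext ⟨p', i'⟩ ⟨q', j'⟩
            simp only [kroneckerMap_apply, Matrix.sum_apply, Matrix.smul_apply,
              Matrix.single, Matrix.of_apply, Prod.mk.injEq, smul_eq_mul, mul_ite,
              mul_one, mul_zero, ite_and]
            rw [Finset.sum_comm]
            simp [Finset.sum_ite_eq, Finset.sum_ite_eq']
          have h0 : choiMat Λ (i,k) (j,l') = G (ρC ⊗ₖ single i j (1:ℂ)) k l' := by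
            simp only [choiMat, Matrix.of_apply]
            rw [hsim]
          rw [h0, hexp]
          rw [map_sum]
          simp only [map_sum, _root_.map_smul, Matrix.sum_apply, Matrix.smul_apply,
            smul_eq_mul]
          rfl
        have hone : ((l:ℂ) • ((1:Matrix a a ℂ) ⊗ₖ γB)) (i,k) (j,l') =
            ∑ p : c, ∑ q : c, ρC p q *
              (((l:ℂ) • ((1:Matrix (c×a) (c×a) ℂ) ⊗ₖ γB)) ((p,i),k) ((q,j),l')) := by
          simp only [Matrix.smul_apply, kroneckerMap_apply, one_apply, Prod.mk.injEq,
            smul_eq_mul, ite_and, mul_ite, mul_zero, mul_one, ite_mul, zero_mul]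
          simp only [Finset.sum_ite_eq, Finset.mem_univ, if_true]
          by_cases h : i = j
          · simp only [h, if_true]
            have h2 : ∑ q : c, ρC q q * ((l:ℂ) * (1 * γB k l'))
                = ρC.trace * ((l:ℂ) * (1 * γB k l')) := by
              rw [Matrix.trace, Finset.sum_mul]; rfl
            rw [h2, hρC.2]; ring
          · simp [h]
        rw [Matrix.sub_apply, hone, hchoi, hDdef]
        rw [← Finset.sum_sub_distrib]
        apply Finset.sum_congr rfl
        intro p _
        rw [← Finset.sum_sub_distrib]
        apply Finset.sum_congr rfl
        intro q _
        simp only [Matrix.sub_apply]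
        ring
      set W : c → Matrix ((c×a)×b) (a×b) ℂ := fun m => Matrix.of fun w u =>
        S m w.1.1 * (if w.2 = u.2 ∧ w.1.2 = u.1 then (1:ℂ) else 0) with hWdef
      have hWm : ∀ (m : c) (u v : a × b), ((W m)ᴴ * D * W m) u v
          = ∑ p : c, ∑ q : c,
            (starRingEnd ℂ) (S m p) * S m q * D ((p,u.1),u.2) ((q,v.1),v.2) := by
        rintro m ⟨i, k⟩ ⟨j, l'⟩
        simp only [hWdef, mul_apply, conjTranspose_apply, Matrix.of_apply,
          Fintype.sum_prod_type, ite_and, mul_ite, ite_mul, zero_mul, mul_zero, mul_one,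
          star_mul', apply_ite star, star_one, star_zero, Finset.sum_ite_eq,
          Finset.sum_ite_eq', Finset.mem_univ, if_true, Finset.sum_mul, Finset.mul_sum]
        rw [Finset.sum_comm]
        apply Finset.sum_congr rfl
        intro p _
        apply Finset.sum_congr rfl
        intro q _
        simp only [Complex.star_def]
        ring
      have hTW : (l:ℂ) • ((1:Matrix a a ℂ) ⊗ₖ γB) - choiMat Λ
          = ∑ m : c, (W m)ᴴ * D * (W m) := by
        ext u v
        rw [key u v, Matrix.sum_apply]
        simp only [hWm]
        have hsplit : ∀ p q : c, ρC p q * D ((p, u.1), u.2) ((q, v.1), v.2)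
            = ∑ m : c, (starRingEnd ℂ) (S m p) * S m q * D ((p, u.1), u.2) ((q, v.1), v.2) := by
          intro p q
          rw [hρS, Finset.sum_mul]
        simp only [hsplit]
        have hswap : ∀ p : c, ∑ q : c, ∑ m : c,
            (starRingEnd ℂ) (S m p) * S m q * D ((p, u.1), u.2) ((q, v.1), v.2)
            = ∑ m : c, ∑ q : c,
            (starRingEnd ℂ) (S m p) * S m q * D ((p, u.1), u.2) ((q, v.1), v.2) :=
          fun p => Finset.sum_comm
        simp only [hswap]
        rw [Finset.sum_comm]
      rw [hTW]
      refine Finset.sum_induction _ _ (fun A B hA hB => hA.add hB)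
        Matrix.PosSemidef.zero (fun m _ => hl.conjTranspose_mul_mul_same (W m))
end
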